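/- arXiv:1706.02205 — 6 statements merged into one kernel-verified Lean document; each statement's English description precedes it below -/
import Mathlib

section
/- Let I be a finite totally ordered index set partitioned into consecutive blocks J⁽¹⁾,…,J⁽q⁾ (the ordering is compatible with the partition: indices in J⁽ᵏ⁾ precede those in J⁽ˡ⁾ whenever k < l), and let Θ ∈ ℝ^{I×I} be symmetric positive definite. For 1 ≤ k ≤ q write I⁽ᵏ⁾ := J⁽¹⁾∪⋯∪J⁽ᵏ⁾, Θ⁽ᵏ⁾ := Θ restricted to I⁽ᵏ⁾×I⁽ᵏ⁾, A⁽ᵏ⁾ := (Θ⁽ᵏ⁾)⁻¹, and B⁽ᵏ⁾ := A⁽ᵏ⁾_{k,k} (the (k,k) block of A⁽ᵏ⁾). Let D be the block diagonal matrix with diagonal blocks B⁽¹⁾⁻¹,…,B⁽q⁾⁻¹, and let L̄ be the inverse of the block lower-triangular matrix whose diagonal blocks are identity matrices and whose (k,l) block for l < k equals B⁽ᵏ⁾⁻¹ A⁽ᵏ⁾_{k,l}. (a) Θ = L̄ D L̄ᵀ. (b) If L̃ is the lower-triangular Cholesky factor of D (the unique lower-triangular matrix with positive diagonal and L̃L̃ᵀ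 = D), then L̄L̃ is the lower-triangular Cholesky factor of Θ, i.e. L̄L̃ is lower triangular with positive diagonal and Θ = (L̄L̃)(L̄L̃)ᵀ. -/
open Matrix

variable {N q : ℕ}

/-- `Θ⁽ᵏ⁾`: the restriction of `Θ` to the index set `I⁽ᵏ⁾ = J⁽¹⁾ ∪ ⋯ ∪ J⁽ᵏ⁾`,
where the blocks are the level sets of `b : Fin N → Fin q`. -/
noncomputable def thetaK (b : Fin N → Fin q) (Θ : Matrix (Fin N) (Fin N) ℝ) (k : Fin q) :
    Matrix {i : Fin N // b i ≤ k} {i : Fin N // b i ≤ k} ℝ :=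
  Θ.submatrix Subtype.val Subtype.val

/-- `A⁽ᵏ⁾ := (Θ⁽ᵏ⁾)⁻¹`. -/
noncomputable def AK (b : Fin N → Fin q) (Θ : Matrix (Fin N) (Fin N) ℝ) (k : Fin q) :
    Matrix {i : Fin N // b i ≤ k} {i : Fin N // b i ≤ k} ℝ :=
  (thetaK b Θ k)⁻¹

/-- `B⁽ᵏ⁾ := A⁽ᵏ⁾_{k,k}`, the `(k,k)` block of `A⁽ᵏ⁾`. -/
noncomputable def BK (b : Fin N → Fin q) (Θ : Matrix (Fin N) (Fin N) ℝ) (k : Fin q) :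
    Matrix {i : Fin N // b i = k} {i : Fin N // b i = k} ℝ :=
  fun i j => AK b Θ k ⟨i.1, i.2.le⟩ ⟨j.1, j.2.le⟩

/-- The block diagonal matrix `D` with diagonal blocks `B⁽¹⁾⁻¹, …, B⁽q⁾⁻¹`. -/
noncomputable def Dmat (b : Fin N → Fin q) (Θ : Matrix (Fin N) (Fin N) ℝ) :
    Matrix (Fin N) (Fin N) ℝ :=
  fun i j => if h : b i = b j then (BK b Θ (b i))⁻¹ ⟨i, rfl⟩ ⟨j, h.symm⟩ else 0

/-- The block lower-triangular matrix with identity diagonal blocks whose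
`(k,l)` block for `l < k` is `B⁽ᵏ⁾⁻¹ A⁽ᵏ⁾_{k,l}`. -/
noncomputable def Mlow (b : Fin N → Fin q) (Θ : Matrix (Fin N) (Fin N) ℝ) :
    Matrix (Fin N) (Fin N) ℝ :=
  fun i j =>
    if b i = b j then (if i = j then 1 else 0)
    else if h : b j < b i then
      ∑ m : {x : Fin N // b x = b i},
        (BK b Θ (b i))⁻¹ ⟨i, rfl⟩ m * AK b Θ (b i) ⟨m.1, m.2.le⟩ ⟨j, h.le⟩
    else 0

/-- `L̄`, the inverse of the block lower-triangular matrix `Mlow`. -/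
noncomputable def LbarMat (b : Fin N → Fin q) (Θ : Matrix (Fin N) (Fin N) ℝ) :
    Matrix (Fin N) (Fin N) ℝ :=
  (Mlow b Θ)⁻¹

/-!
Write `M` for `Mlow`, so that `L̄ = M⁻¹`. For `k = b i`, row `i` of `M` vanishes outside `I⁽ᵏ⁾`
and on `I⁽ᵏ⁾` it is row `i` of `B⁽ᵏ⁾⁻¹ A⁽ᵏ⁾_{k,·}`; since `A⁽ᵏ⁾ Θ⁽ᵏ⁾ = 1`, this gives
`(M Θ)_{ij} = D_{ij}` whenever `b j ≤ b i`. Multiplying on the right by the block upper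
unitriangular `Mᵀ` preserves this, and the symmetry of `M Θ Mᵀ` then forces `M Θ Mᵀ = D`,
i.e. `Θ = L̄ D L̄ᵀ`. Finally `L̄` is unit lower triangular, so `L̄ L̃` is lower triangular with
the diagonal of `L̃`, and `(L̄ L̃)(L̄ L̃)ᵀ = L̄ D L̄ᵀ = Θ`.
-/

open OrderDual

namespace Matrix

section Triangular

variable {n α R : Type*} [Fintype n]

theorem BlockTriangular.nonsing_inv [DecidableEq n] [LinearOrder α] [CommRing R]
    {M : Matrix n n R} {b : n → α} (hM : M.BlockTriangular b) : M⁻¹.BlockTriangular b := by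
  by_cases h : IsUnit M.det
  · have : Invertible M := M.invertibleOfIsUnitDet h
    exact blockTriangular_inv_of_blockTriangular hM
  · rw [nonsing_inv_apply_not_isUnit M h]
    exact blockTriangular_zero

variable [LinearOrder n]

theorem IsLowerTriangular.mul_apply_self [NonUnitalNonAssocSemiring R] {M N : Matrix n n R}
    (hM : M.IsLowerTriangular) (hN : N.IsLowerTriangular) (i : n) :
    (M * N) i i = M i i * N i i := by
  rw [mul_apply]
  refine Fintype.sum_eq_single i fun k hk => ?_
  rcases hk.lt_or_gt with hki | hik
  · rw [hN (show toDual i < toDual k from hki), mul_zero]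
  · rw [hM (show toDual k < toDual i from hik), zero_mul]

theorem IsLowerTriangular.nonsing_inv_apply_self [DecidableEq n] [CommRing R]
    {M : Matrix n n R} (hM : M.IsLowerTriangular) (hdiag : ∀ i, M i i = 1) (i : n) :
    M⁻¹ i i = 1 := by
  have hdet : IsUnit M.det := by simp [det_of_isLowerTriangular M hM, hdiag]
  have h := congrFun (congrFun (mul_nonsing_inv M hdet) i) i
  rwa [hM.mul_apply_self (BlockTriangular.nonsing_inv hM), hdiag, one_mul, one_apply_eq] at h

end Triangular

section BlockConjugation

variable {n α R : Type*} [LinearOrder α] {b : n → α}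

theorem eq_of_isSymm_of_apply_eq_of_le [Zero R] {X D : Matrix n n R} (hX : X.IsSymm)
    (hD : ∀ i j, b i ≠ b j → D i j = 0) (h : ∀ i j, b j ≤ b i → X i j = D i j) : X = D := by
  ext i j
  rcases le_or_gt (b j) (b i) with hji | hij
  · exact h i j hji
  · rw [← hX.apply, h j i hij.le, hD j i hij.ne', hD i j hij.ne]

variable [Fintype n] [DecidableEq n]

theorem mul_transpose_apply_of_le [Semiring R] {P M D : Matrix n n R}
    (hM : M.BlockTriangular (toDual ∘ b))
    (hM_diag : ∀ i j, b i = b j → M i j = (1 : Matrix n n R) i j)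
    (hD : ∀ i j, b i ≠ b j → D i j = 0) (hP : ∀ i j, b j ≤ b i → P i j = D i j)
    {i j : n} (hji : b j ≤ b i) : (P * Mᵀ) i j = D i j := by
  rw [mul_apply, Fintype.sum_eq_single j, transpose_apply, hM_diag j j rfl, one_apply_eq, mul_one,
    hP i j hji]
  intro k hkj
  rw [transpose_apply]
  rcases lt_or_ge (b j) (b k) with hjk | hkj'
  · rw [hM (show toDual (b k) < toDual (b j) from hjk), mul_zero]
  by_cases hik : b i = b k
  · rw [hM_diag j k (le_antisymm hkj' (hik ▸ hji)).symm, one_apply_ne hkj.symm, mul_zero]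
  · rw [hP i k (hkj'.trans hji), hD i k hik, zero_mul]

theorem mul_mul_transpose_eq_of_blockTriangular [CommSemiring R] {M Θ D : Matrix n n R}
    (hM : M.BlockTriangular (toDual ∘ b))
    (hM_diag : ∀ i j, b i = b j → M i j = (1 : Matrix n n R) i j)
    (hΘ : Θ.IsSymm) (hD : ∀ i j, b i ≠ b j → D i j = 0)
    (hMΘ : ∀ i j, b j ≤ b i → (M * Θ) i j = D i j) : M * Θ * Mᵀ = D := by
  have hsymm : (M * Θ * Mᵀ).IsSymm := by
    simp only [IsSymm, transpose_mul, transpose_transpose, hΘ.eq, Matrix.mul_assoc]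
  exact eq_of_isSymm_of_apply_eq_of_le hsymm hD fun i j hji =>
    mul_transpose_apply_of_le hM hM_diag hD hMΘ hji

end BlockConjugation

theorem nonsing_inv_mul_mul_transpose_cancel {n R : Type*} [Fintype n] [DecidableEq n] [CommRing R]
    {M : Matrix n n R} (hM : IsUnit M.det) (Θ : Matrix n n R) : M⁻¹ * (M * Θ * Mᵀ) * M⁻¹ᵀ = Θ := by
  rw [transpose_nonsing_inv, Matrix.mul_assoc M, nonsing_inv_mul_cancel_left _ _ hM,
    mul_nonsing_inv_cancel_right _ _ (by rwa [det_transpose])]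

end Matrix

section BlockCholesky

variable {b : Fin N → Fin q} {Θ : Matrix (Fin N) (Fin N) ℝ}

theorem thetaK_posDef (hΘ : Θ.PosDef) (k : Fin q) : (thetaK b Θ k).PosDef :=
  hΘ.submatrix Subtype.val_injective

theorem BK_posDef (hΘ : Θ.PosDef) (k : Fin q) : (BK b Θ k).PosDef :=
  (thetaK_posDef hΘ k).inv.submatrix fun _ _ h => Subtype.ext (congrArg Subtype.val h :)

theorem AK_mul_thetaK (hΘ : Θ.PosDef) (k : Fin q) : AK b Θ k * thetaK b Θ k = 1 :=
  nonsing_inv_mul _ ((isUnit_iff_isUnit_det _).mp (thetaK_posDef hΘ k).isUnit)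

theorem inv_BK_mul_BK (hΘ : Θ.PosDef) (k : Fin q) : (BK b Θ k)⁻¹ * BK b Θ k = 1 :=
  nonsing_inv_mul _ ((isUnit_iff_isUnit_det _).mp (BK_posDef hΘ k).isUnit)

noncomputable def AKRow (b : Fin N → Fin q) (Θ : Matrix (Fin N) (Fin N) ℝ) (k : Fin q) :
    Matrix {i : Fin N // b i = k} {i : Fin N // b i ≤ k} ℝ :=
  (AK b Θ k).submatrix (fun i => ⟨i.1, i.2.le⟩) id

theorem AKRow_mul_thetaK (hΘ : Θ.PosDef) (k : Fin q) :
    AKRow b Θ k * thetaK b Θ k = (1 : Matrix {i : Fin N // b i ≤ k} {i : Fin N // b i ≤ k} ℝ).submatrix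
      (fun i => ⟨i.1, i.2.le⟩) id := by
  rw [AKRow, ← submatrix_id_id (thetaK b Θ k), ← submatrix_mul _ _ _ _ _ Function.bijective_id,
    AK_mul_thetaK hΘ]

theorem Dmat_of_ne {i j : Fin N} (h : b i ≠ b j) : Dmat b Θ i j = 0 := dif_neg h

theorem Mlow_of_eq {i j : Fin N} (h : b i = b j) :
    Mlow b Θ i j = (1 : Matrix (Fin N) (Fin N) ℝ) i j := by
  simp [Mlow, h, one_apply]

theorem Mlow_blockTriangular : (Mlow b Θ).BlockTriangular (toDual ∘ b) :=
  fun i j (h : b i < b j) => by simp [Mlow, h.ne, h.not_gt]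

theorem Mlow_isLowerTriangular (hb : Monotone b) : (Mlow b Θ).IsLowerTriangular := by
  intro i j (h : i < j)
  rcases (hb h.le).lt_or_eq with hlt | heq
  · exact Mlow_blockTriangular hlt
  · rw [Mlow_of_eq heq, one_apply_ne h.ne]

theorem Mlow_apply_self (i : Fin N) : Mlow b Θ i i = 1 := by
  rw [Mlow_of_eq rfl, one_apply_eq]

theorem Mlow_apply_of_le (hΘ : Θ.PosDef) {i j : Fin N} (h : b j ≤ b i) :
    Mlow b Θ i j = ((BK b Θ (b i))⁻¹ * AKRow b Θ (b i)) ⟨i, rfl⟩ ⟨j, h⟩ := by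
  rcases h.lt_or_eq with hlt | heq
  · simp only [Mlow, if_neg hlt.ne', dif_pos hlt]
    rfl
  · change _ = ((BK b Θ (b i))⁻¹ * BK b Θ (b i)) ⟨i, rfl⟩ ⟨j, heq⟩
    rw [Mlow_of_eq heq.symm, inv_BK_mul_BK hΘ, one_apply, one_apply]
    simp only [Subtype.mk.injEq]

theorem Mlow_mul_apply_of_le (hΘ : Θ.PosDef) {i j : Fin N} (h : b j ≤ b i) :
    (Mlow b Θ * Θ) i j = Dmat b Θ i j := by
  set k := b i
  calc (Mlow b Θ * Θ) i j = ∑ m : {x // b x ≤ k}, Mlow b Θ i m * thetaK b Θ k m ⟨j, h⟩ := by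
        rw [Matrix.mul_apply, ← Finset.sum_filter_of_ne (p := fun m => b m ≤ k),
          Finset.sum_subtype (p := fun m => b m ≤ k) _ (fun _ => by simp)]
        · rfl
        intro m _ hm
        by_contra hlt
        rw [Mlow_blockTriangular (show toDual (b m) < toDual k from not_le.mp hlt), zero_mul] at hm
        exact hm rfl
    _ = ((BK b Θ k)⁻¹ * AKRow b Θ k * thetaK b Θ k) ⟨i, rfl⟩ ⟨j, h⟩ := by
        rw [Matrix.mul_apply]
        exact Finset.sum_congr rfl fun m _ => by rw [Mlow_apply_of_le hΘ m.2]
    _ = ((BK b Θ k)⁻¹ * (1 : Matrix {x // b x ≤ k} {x // b x ≤ k} ℝ).submatrix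
          (fun s : {x // b x = k} => ⟨s.1, s.2.le⟩) id) ⟨i, rfl⟩ ⟨j, h⟩ := by
        rw [Matrix.mul_assoc, AKRow_mul_thetaK hΘ]
    _ = Dmat b Θ i j := by
        rw [Matrix.mul_apply]
        simp only [submatrix_apply, id, one_apply, Subtype.ext_iff, mul_ite, mul_one, mul_zero]
        by_cases hij : k = b j
        · rw [Fintype.sum_eq_single ⟨j, hij.symm⟩
            fun s hs => if_neg fun hsj => hs (Subtype.ext hsj), if_pos rfl, Dmat, dif_pos hij]
        · rw [Dmat_of_ne hij, Finset.sum_eq_zero fun s _ => if_neg fun hs => hij (hs ▸ s.2).symm]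

theorem Mlow_mul_mul_transpose (hΘ : Θ.PosDef) : Mlow b Θ * Θ * (Mlow b Θ)ᵀ = Dmat b Θ :=
  mul_mul_transpose_eq_of_blockTriangular Mlow_blockTriangular (fun _ _ => Mlow_of_eq)
    (isHermitian_iff_isSymm.mp hΘ.isHermitian) (fun _ _ => Dmat_of_ne)
    fun _ _ => Mlow_mul_apply_of_le hΘ

end BlockCholesky

/-- Block Cholesky decomposition `Θ = L̄ D L̄ᵀ`, and if `L̃` is the
lower-triangular Cholesky factor of `D`, then `L̄ L̃` is the lower-triangular
Cholesky factor of `Θ`. -/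
theorem block_cholesky_decomposition
    (b : Fin N → Fin q) (hb : Monotone b)
    (Θ : Matrix (Fin N) (Fin N) ℝ) (hΘ : Θ.PosDef)
    (Lt : Matrix (Fin N) (Fin N) ℝ)
    (hLt_tri : ∀ i j : Fin N, i < j → Lt i j = 0)
    (hLt_diag : ∀ i : Fin N, 0 < Lt i i)
    (hLt_chol : Lt * Ltᵀ = Dmat b Θ) :
    Θ = LbarMat b Θ * Dmat b Θ * (LbarMat b Θ)ᵀ ∧
    ((∀ i j : Fin N, i < j → (LbarMat b Θ * Lt) i j = 0) ∧
      (∀ i : Fin N, 0 < (LbarMat b Θ * Lt) i i) ∧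
      Θ = (LbarMat b Θ * Lt) * (LbarMat b Θ * Lt)ᵀ) := by
  have hM := Mlow_isLowerTriangular (Θ := Θ) hb
  have hM_det : IsUnit (Mlow b Θ).det := by
    simp [det_of_isLowerTriangular _ hM, Mlow_apply_self]
  have hfactor : Θ = LbarMat b Θ * Dmat b Θ * (LbarMat b Θ)ᵀ := by
    rw [LbarMat, ← Mlow_mul_mul_transpose hΘ, nonsing_inv_mul_mul_transpose_cancel hM_det]
  have hLbar : (LbarMat b Θ).IsLowerTriangular := BlockTriangular.nonsing_inv hM
  have hLt : Lt.IsLowerTriangular := fun i j h => hLt_tri i j h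
  refine ⟨hfactor, fun i j h => hLbar.mul hLt (show toDual j < toDual i from h), fun i => ?_, ?_⟩
  · rw [hLbar.mul_apply_self hLt, LbarMat, hM.nonsing_inv_apply_self Mlow_apply_self, one_mul]
    exact hLt_diag i
  · rw [transpose_mul, Matrix.mul_assoc, ← Matrix.mul_assoc Lt, hLt_chol, ← Matrix.mul_assoc]
    exact hfactor
end

section
/- Let B be a real Banach space with continuous dual B*, let 𝓛 : B → B* be a bounded linear bijection that is symmetric ([𝓛u, v] = [𝓛v, u]) and positive ([𝓛u, u] ≥ 0), and let G := 𝓛⁻¹. Define ‖u‖ := [𝓛u, u]^{1/2} and ‖φ‖_* := sup_{0 ≠ u ∈ B} [φ, u]/‖u‖. Let {φ_i}_{i∈I} ⊂ B* be linearly independent with I finite and written as a disjoint union I = I₁ ∪ I₂, and let Θ ∈ ℝ^{I×I} be the matrix Θ_{ij} := [φ_i, Gφ_j], with blocks Θ₁₁, Θ₁₂, Θ₂₁, Θ₂₂ relative to I₁, I₂. Then for every α ∈ ℝ^{I₂}, setting φ := Σ_{i∈I₂} α_i φ_i, one has min_{φ' ∈ span{φ_i : i ∈ I₁}} ‖φ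 − φ'‖_*² = αᵀ (Θ₂₂ − Θ₂₁ Θ₁₁⁻¹ Θ₁₂) α. -/
/-!
Cauchy–Schwarz for the energy pairing `[𝓛u, v]` shows that the supremum defining `‖ψ‖_*` is
attained at `u = Gψ`, so `‖ψ‖_*² = [ψ, Gψ]`. The pairing `(ψ, χ) ↦ [ψ, Gχ]` is an inner product
on `B*` whose Gram matrix on the `φ_i` is `Θ`; hence `Θ` is positive definite, and writing
`φ' = -Σ_{i∈I₁} x_i φ_i` turns the squared distance into the quadratic form of `Θ` at `(x, α)`.
Completing the square in `x` (Schur complement) gives the minimum, attained at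
`x = -Θ₁₁⁻¹ Θ₁₂ α`.
-/

open Matrix

/-- The dual norm `‖φ‖_* = sup_{0 ≠ u} [φ, u] / ‖u‖`, where `‖u‖ = [𝓛u, u]^{1/2}`
is the energy norm induced by `𝓛`. -/
noncomputable def dualNorm {E : Type*} [NormedAddCommGroup E] [NormedSpace ℝ E]
    (L : E →L[ℝ] StrongDual ℝ E) (φ : StrongDual ℝ E) : ℝ :=
  ⨆ u : {u : E // u ≠ 0}, φ u.1 / Real.sqrt (L u.1 u.1)

namespace LinearMap.BilinForm

variable {ι : Type*} [Fintype ι]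

theorem dotProduct_gram_mulVec {R M : Type*} [CommSemiring R] [AddCommMonoid M] [Module R M]
    (B : LinearMap.BilinForm R M) (v : ι → M) (x y : ι → R) :
    x ⬝ᵥ (of (fun i j => B (v i) (v j)) *ᵥ y) = B (∑ i, x i • v i) (∑ j, y j • v j) := by
  simp only [dotProduct, mulVec, of_apply, map_sum, map_smul, LinearMap.sum_apply,
    LinearMap.smul_apply, smul_eq_mul, Finset.mul_sum]
  rw [Finset.sum_comm]
  refine Finset.sum_congr rfl fun i _ => Finset.sum_congr rfl fun j _ => ?_
  ring

theorem posDef_gram {M : Type*} [AddCommGroup M] [Module ℝ M] {B : LinearMap.BilinForm ℝ M}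
    (hB : B.IsSymm) (hpos : ∀ w, w ≠ 0 → 0 < B w w) {v : ι → M} (hv : LinearIndependent ℝ v) :
    (of fun i j => B (v i) (v j)).PosDef := by
  refine .of_dotProduct_mulVec_pos ?_ fun x hx => ?_
  · ext i j
    exact hB.eq (v j) (v i)
  · rw [star_trivial, dotProduct_gram_mulVec]
    refine hpos _ fun h => hx ?_
    exact funext (Fintype.linearIndependent_iff.1 hv x h)

end LinearMap.BilinForm

theorem Matrix.isLeast_schur_complement {m n : Type*} [Fintype m] [DecidableEq m] [Fintype n]
    {A : Matrix m m ℝ} (B : Matrix m n ℝ) (D : Matrix n n ℝ) (hA : A.PosDef) (y : n → ℝ) :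
    IsLeast (Set.range fun x => (x ⊕ᵥ y) ⬝ᵥ (fromBlocks A B Bᴴ D *ᵥ (x ⊕ᵥ y)))
      (y ⬝ᵥ ((D - Bᴴ * A⁻¹ * B) *ᵥ y)) := by
  have := hA.isUnit.invertible
  have hschur (x : m → ℝ) := by
    simpa only [star_trivial, ← dotProduct_mulVec] using
      schur_complement_eq₁₁ B D x y hA.isHermitian
  refine ⟨⟨-((A⁻¹ * B) *ᵥ y), by
    simp only [hschur, neg_add_cancel, zero_dotProduct, zero_add]⟩, ?_⟩
  rintro _ ⟨x, rfl⟩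
  simp only [hschur, le_add_iff_nonneg_left]
  simpa using hA.posSemidef.dotProduct_mulVec_nonneg (x + (A⁻¹ * B) *ᵥ y)

section SpanDifference

variable {R M ι κ : Type*} [Ring R] [AddCommGroup M] [Module R M] [Fintype ι] [Fintype κ]
  (φ : ι ⊕ κ → M) (α : κ → R)

theorem sum_inr_sub_sum_inl (β : ι → R) :
    (∑ i, α i • φ (Sum.inr i)) - ∑ i, β i • φ (Sum.inl i) = ∑ k, ((-β) ⊕ᵥ α) k • φ k := by
  rw [Fintype.sum_sum_type, sub_eq_add_neg, add_comm, ← Finset.sum_neg_distrib]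
  simp only [Sum.elim_inl, Sum.elim_inr, Pi.neg_apply]
  exact congrArg (· + _) (Finset.sum_congr rfl fun i _ => (neg_smul _ _).symm)

theorem setOf_sub_mem_span_inl_eq_range {X : Type*} (f : M → X) :
    {y | ∃ φ' ∈ Submodule.span R (Set.range fun i => φ (Sum.inl i)),
      y = f ((∑ i, α i • φ (Sum.inr i)) - φ')}
      = Set.range fun x => f (∑ k, (x ⊕ᵥ α) k • φ k) := by
  rw [← (Equiv.neg (ι → R)).surjective.range_comp]
  ext y
  simp only [Set.mem_ofPred_eq, Set.mem_range, Submodule.mem_span_range_iff_exists_fun,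
    exists_exists_eq_and, Function.comp_apply, Equiv.neg_apply, ← sum_inr_sub_sum_inl]
  exact exists_congr fun _ => eq_comm

end SpanDifference

section EnergyPairing

variable {E : Type*} [NormedAddCommGroup E] [NormedSpace ℝ E] {L : E →L[ℝ] StrongDual ℝ E}
  {G : StrongDual ℝ E → E}

theorem dualNorm_eq_sqrt (hLsymm : ∀ u v : E, L u v = L v u) (hLpos : ∀ u : E, 0 ≤ L u u)
    (hLG : ∀ ψ : StrongDual ℝ E, L (G ψ) = ψ) (ψ : StrongDual ℝ E) :
    dualNorm L ψ = √(ψ (G ψ)) := by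
  by_cases hGψ : G ψ = 0
  · have hψ : ψ = 0 := by rw [← hLG ψ, hGψ, map_zero]
    simp [dualNorm, hψ]
  have hnonneg : 0 ≤ ψ (G ψ) := by simpa only [hLG] using hLpos (G ψ)
  have hbound (u : {u : E // u ≠ 0}) : ψ u.1 / √(L u.1 u.1) ≤ √(ψ (G ψ)) := by
    refine div_le_of_le_mul₀ (Real.sqrt_nonneg _) (Real.sqrt_nonneg _) ?_
    rw [← Real.sqrt_mul hnonneg]
    refine (le_abs_self _).trans (Real.abs_le_sqrt ?_)
    have hcs : L (G ψ) u.1 ^ 2 ≤ L (G ψ) (G ψ) * L u.1 u.1 :=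
      LinearMap.BilinForm.apply_sq_le_of_symm L.toLinearMap₁₂ hLpos ⟨hLsymm⟩ (G ψ) u.1
    simpa only [hLG] using hcs
  have : Nonempty {u : E // u ≠ 0} := ⟨⟨G ψ, hGψ⟩⟩
  refine le_antisymm (ciSup_le hbound) (le_ciSup_of_le ⟨_, Set.forall_mem_range.2 hbound⟩
    ⟨G ψ, hGψ⟩ ?_)
  rw [hLG, Real.div_sqrt]

theorem apply_comm_of_rightInverse (hLsymm : ∀ u v : E, L u v = L v u)
    (hLG : ∀ ψ : StrongDual ℝ E, L (G ψ) = ψ) (ψ χ : StrongDual ℝ E) : ψ (G χ) = χ (G ψ) := by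
  conv_lhs => rw [← hLG ψ]
  rw [hLsymm, hLG]

variable (hLsymm : ∀ u v : E, L u v = L v u) (hLG : ∀ ψ : StrongDual ℝ E, L (G ψ) = ψ)

def dualForm : LinearMap.BilinForm ℝ (StrongDual ℝ E) :=
  LinearMap.mk₂ ℝ (fun ψ χ => ψ (G χ)) (fun _ _ _ => rfl) (fun _ _ _ => rfl)
    (fun ψ χ₁ χ₂ => by
      simp only [apply_comm_of_rightInverse hLsymm hLG ψ, _root_.add_apply])
    (fun c ψ χ => by
      simp only [apply_comm_of_rightInverse hLsymm hLG ψ, _root_.smul_apply,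
        smul_eq_mul])

@[simp]
theorem dualForm_apply (ψ χ : StrongDual ℝ E) : dualForm hLsymm hLG ψ χ = ψ (G χ) :=
  rfl

theorem dualForm_isSymm : (dualForm hLsymm hLG).IsSymm :=
  ⟨apply_comm_of_rightInverse hLsymm hLG⟩

theorem dualForm_pos (hLpos : ∀ u : E, 0 ≤ L u u) {ψ : StrongDual ℝ E} (hψ : ψ ≠ 0) :
    0 < dualForm hLsymm hLG ψ ψ := by
  rw [dualForm_apply]
  nth_rewrite 1 [← hLG ψ]
  refine (hLpos (G ψ)).lt_of_ne' fun h => hψ ?_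
  have hker : L.toLinearMap₁₂ (G ψ) = 0 :=
    (LinearMap.BilinForm.apply_apply_same_eq_zero_iff L.toLinearMap₁₂ hLpos ⟨hLsymm⟩).1 h
  rw [← hLG ψ]
  ext u
  exact LinearMap.congr_fun hker u

theorem sq_dualNorm (hLpos : ∀ u : E, 0 ≤ L u u) (ψ : StrongDual ℝ E) :
    dualNorm L ψ ^ 2 = dualForm hLsymm hLG ψ ψ := by
  rw [dualNorm_eq_sqrt hLsymm hLpos hLG, dualForm_apply,
    Real.sq_sqrt (by simpa only [hLG] using hLpos (G ψ))]

end EnergyPairing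

theorem dual_distance_eq_schur_quadratic_form_general
    {E : Type*} [NormedAddCommGroup E] [NormedSpace ℝ E]
    (L : E →L[ℝ] StrongDual ℝ E)
    (hLsymm : ∀ u v : E, L u v = L v u) (hLpos : ∀ u : E, 0 ≤ L u u)
    (G : StrongDual ℝ E → E)
    (hLG : ∀ ψ : StrongDual ℝ E, L (G ψ) = ψ)
    {I₁ I₂ : Type*} [Fintype I₁] [Fintype I₂] [DecidableEq I₁]
    (φ : I₁ ⊕ I₂ → StrongDual ℝ E) (hφ : LinearIndependent ℝ φ)
    (Θ : Matrix (I₁ ⊕ I₂) (I₁ ⊕ I₂) ℝ) (hΘ : ∀ i j, Θ i j = (φ i) (G (φ j)))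
    (α : I₂ → ℝ) :
    IsLeast
      {x : ℝ | ∃ φ' ∈ Submodule.span ℝ (Set.range fun i : I₁ => φ (Sum.inl i)),
        x = (dualNorm L ((∑ i : I₂, α i • φ (Sum.inr i)) - φ')) ^ 2}
      (α ⬝ᵥ ((Θ.toBlocks₂₂ - Θ.toBlocks₂₁ * Θ.toBlocks₁₁⁻¹ * Θ.toBlocks₁₂) *ᵥ α)) := by
  have hΘB : Θ = of fun i j => dualForm hLsymm hLG (φ i) (φ j) := Matrix.ext hΘ
  have hΘpos : Θ.PosDef := hΘB ▸ LinearMap.BilinForm.posDef_gram (dualForm_isSymm hLsymm hLG)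
    (fun _ => dualForm_pos hLsymm hLG hLpos) hφ
  have h21 : Θ.toBlocks₂₁ = Θ.toBlocks₁₂ᴴ := by
    ext i j
    exact (hΘpos.isHermitian.apply _ _).symm
  have hquad (x : I₁ → ℝ) :
      dualNorm L (∑ k, (x ⊕ᵥ α) k • φ k) ^ 2 = (x ⊕ᵥ α) ⬝ᵥ (Θ *ᵥ (x ⊕ᵥ α)) := by
    rw [sq_dualNorm hLsymm hLG hLpos, hΘB, LinearMap.BilinForm.dotProduct_gram_mulVec]
  have hschur := isLeast_schur_complement (A := Θ.toBlocks₁₁) Θ.toBlocks₁₂ Θ.toBlocks₂₂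
    (hΘpos.submatrix Sum.inl_injective) α
  rw [← h21, fromBlocks_toBlocks, ← funext hquad] at hschur
  convert hschur using 1
  exact setOf_sub_mem_span_inl_eq_range φ α (dualNorm L · ^ 2)

/-- For `φ = Σ_{i∈I₂} α_i φ_i`, the squared dual-norm distance of `φ`
to `span{φ_i : i ∈ I₁}` is attained and equals `αᵀ (Θ₂₂ − Θ₂₁ Θ₁₁⁻¹ Θ₁₂) α`. -/
theorem dual_distance_eq_schur_quadratic_form
    {E : Type*} [NormedAddCommGroup E] [NormedSpace ℝ E] [CompleteSpace E]
    (L : E →L[ℝ] StrongDual ℝ E)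
    (hLbij : Function.Bijective L)
    (hLsymm : ∀ u v : E, L u v = L v u) (hLpos : ∀ u : E, 0 ≤ L u u)
    (G : StrongDual ℝ E → E)
    (hGL : ∀ u : E, G (L u) = u) (hLG : ∀ ψ : StrongDual ℝ E, L (G ψ) = ψ)
    {I₁ I₂ : Type*} [Fintype I₁] [Fintype I₂] [DecidableEq I₁]
    (φ : I₁ ⊕ I₂ → StrongDual ℝ E) (hφ : LinearIndependent ℝ φ)
    (Θ : Matrix (I₁ ⊕ I₂) (I₁ ⊕ I₂) ℝ) (hΘ : ∀ i j, Θ i j = (φ i) (G (φ j)))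
    (α : I₂ → ℝ) :
    IsLeast
      {x : ℝ | ∃ φ' ∈ Submodule.span ℝ (Set.range fun i : I₁ => φ (Sum.inl i)),
        x = (dualNorm L ((∑ i : I₂, α i • φ (Sum.inr i)) - φ')) ^ 2}
      (α ⬝ᵥ ((Θ.toBlocks₂₂ - Θ.toBlocks₂₁ * Θ.toBlocks₁₁⁻¹ * Θ.toBlocks₁₂) *ᵥ α)) :=
  dual_distance_eq_schur_quadratic_form_general L hLsymm hLpos G hLG φ hφ Θ hΘ α
end

section
/- Let I be a finite index set, d a metric on I, and A ∈ ℝ^{I×I} symmetric positive definite with |A_{ij}| ≤ C exp(−γ d(i,j)) for all i, j ∈ I, for some constants C, γ > 0. Set c_d(γ/2) := sup_{j∈I} Σ_{i∈I} exp(−(γ/2) d(i,j)), κ := ‖A‖·‖A⁻¹‖ (operator norms), r := (1 − κ⁻¹)/(1 + κ⁻¹), and C_R := max{1, 2C/(‖A‖ + ‖A⁻¹‖⁻¹)}. Then for all i, j ∈ I, |(A⁻¹)_{ij}| ≤ [4 / ((‖A‖ + ‖A⁻¹‖⁻¹)(1−r)²)] · exp( −[log(1/r) / (1 + log(c_d(γ/2))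 + log(C_R) + log(1/r))] · (γ/2) · d(i,j) ). -/
open Matrix

noncomputable def euclOpNorm {I : Type*} [Fintype I] [DecidableEq I]
    (A : Matrix I I ℝ) : ℝ :=
  ‖Matrix.toEuclideanCLM (𝕜 := ℝ) A‖

/-- `c_d(t) := sup_{j ∈ I} Σ_{i ∈ I} exp(−t d(i,j))`. -/
noncomputable def cdSum {I : Type*} [Fintype I] (d : I → I → ℝ) (t : ℝ) : ℝ :=
  ⨆ j : I, ∑ i : I, Real.exp (-t * d i j)

/-!
Write `a = ‖A‖` and `b = ‖A⁻¹‖⁻¹`. The spectrum of `A` lies in `[b, a]`, so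
`B = 1 - (2 / (a + b)) • A` has `‖B‖ ≤ r = (a - b) / (a + b)`, and for every `N`
`A⁻¹ = (2 / (a + b)) • ∑_{k < N} B ^ k + A⁻¹ * B ^ N`.
The entries of `B` decay at rate `γ` with constant `CR`. In each further matrix product half of
the rate pays for the sum over the middle index, so
`|(B ^ k) i j| ≤ (CR * c) ^ k * exp (-(γ / 2) * d i j)` with `c = cdSum d (γ / 2)`,
while the remainder is at most `‖A⁻¹‖ * r ^ N`. Taking
`N = ⌈(γ / 2) * d i j / (1 + log c + log CR + log (1 / r))⌉` balances the growth of the partial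
sum against the geometric decay of the remainder.
-/

open Finset Real Set
open scoped Matrix.Norms.L2Operator

namespace Matrix

lemma norm_entry_le_l2_opNorm {m n 𝕜 : Type*} [Fintype m] [Fintype n] [DecidableEq n] [RCLike 𝕜]
    (X : Matrix m n 𝕜) (i : m) (j : n) : ‖X i j‖ ≤ ‖X‖ := by
  have h := X.l2_opNorm_mulVec (PiLp.single 2 j 1)
  rw [PiLp.norm_single, norm_one, mul_one] at h
  refine le_trans (le_of_eq ?_) ((PiLp.norm_apply_le _ i).trans h)
  simp

variable {n : Type*} [Fintype n] [DecidableEq n] {A : Matrix n n ℝ}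

lemma PosDef.cfc_inv_eq_nonsing_inv (hA : A.PosDef) : cfc (fun x : ℝ ↦ x⁻¹) A = A⁻¹ := by
  have := cfc_inv_id (R := ℝ) hA.isUnit.unit hA.isHermitian
  simpa [Matrix.coe_units_inv] using this

lemma PosDef.spectrum_subset_Icc (hA : A.PosDef) : spectrum ℝ A ⊆ Icc ‖A⁻¹‖⁻¹ ‖A‖ := by
  have hpos : ∀ x ∈ spectrum ℝ A, 0 < x := by
    rw [hA.isHermitian.spectrum_real_eq_range_eigenvalues]
    rintro - ⟨i, rfl⟩
    exact hA.eigenvalues_pos i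
  intro x hx
  have hup : ‖x‖ ≤ ‖cfc id A‖ := norm_apply_le_norm_cfc id A hx (ha := hA.isHermitian)
  have hinv : ‖x⁻¹‖ ≤ ‖cfc (fun x : ℝ ↦ x⁻¹) A‖ :=
    norm_apply_le_norm_cfc _ A hx (continuousOn_inv₀.mono fun y hy ↦ (hpos y hy).ne')
      hA.isHermitian
  rw [cfc_id ℝ A hA.isHermitian, Real.norm_of_nonneg (hpos x hx).le] at hup
  rw [hA.cfc_inv_eq_nonsing_inv, Real.norm_of_nonneg (inv_nonneg.2 (hpos x hx).le)] at hinv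
  exact ⟨inv_le_of_inv_le₀ (hpos x hx) hinv, hup⟩

lemma PosDef.l2_opNorm_inv_pos [Nonempty n] (hA : A.PosDef) : 0 < ‖A⁻¹‖ :=
  norm_pos_iff.2 (isUnit_nonsing_inv_iff.2 hA.isUnit).ne_zero

lemma PosDef.l2_opNorm_inv_inv_le [Nonempty n] (hA : A.PosDef) : ‖A⁻¹‖⁻¹ ≤ ‖A‖ := by
  obtain ⟨i⟩ := ‹Nonempty n›
  obtain ⟨hlo, hhi⟩ := hA.spectrum_subset_Icc (hA.isHermitian.eigenvalues_mem_spectrum_real i)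
  exact hlo.trans hhi

end Matrix

lemma norm_one_sub_smul_le_of_spectrum_subset_Icc {B : Type*} [NormedRing B] [StarRing B]
    [NormedAlgebra ℝ B] [IsometricContinuousFunctionalCalculus ℝ B IsSelfAdjoint]
    {a : B} (ha : IsSelfAdjoint a) {lo hi : ℝ} (hlo : 0 < lo) (hlohi : lo ≤ hi)
    (h : spectrum ℝ a ⊆ Icc lo hi) :
    ‖1 - (2 / (hi + lo)) • a‖ ≤ (hi - lo) / (hi + lo) := by
  have hcfc : 1 - (2 / (hi + lo)) • a = cfc (fun x ↦ 1 - 2 / (hi + lo) * x) a := by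
    rw [cfc_sub .., cfc_const_one .., cfc_const_mul_id ..]
  rw [hcfc]
  refine norm_cfc_le (by apply div_nonneg <;> linarith) fun x hx ↦ ?_
  obtain ⟨hxlo, hxhi⟩ := h hx
  rw [Real.norm_eq_abs, abs_le, div_mul_eq_mul_div, one_sub_div (by linarith)]
  constructor
  · rw [← neg_div, div_le_div_iff_of_pos_right (by linarith)]
    linarith
  · rw [div_le_div_iff_of_pos_right (by linarith)]
    linarith

lemma eq_smul_geom_sum_add_mul_pow {𝕜 R : Type*} [CommSemiring 𝕜] [Ring R] [Algebra 𝕜 R]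
    {x a : R} (h : x * a = 1) (m : 𝕜) (N : ℕ) :
    x = m • ∑ k ∈ range N, (1 - m • a) ^ k + x * (1 - m • a) ^ N := by
  have hgeom := mul_neg_geom_sum (1 - m • a) N
  rw [sub_sub_cancel, smul_mul_assoc] at hgeom
  have := congrArg (x * ·) hgeom
  simp only [mul_smul_comm, ← mul_assoc, h, one_mul, mul_sub, mul_one] at this
  rw [this, sub_add_cancel]

section Decay

variable {ι : Type*} {d : ι → ι → ℝ}

lemma nonneg_of_triangle (hd_self : ∀ i, d i i = 0) (hd_symm : ∀ i j, d i j = d j i)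
    (hd_tri : ∀ i j k, d i k ≤ d i j + d j k) (i j : ι) : 0 ≤ d i j := by
  have := hd_tri i j i
  rw [hd_self, hd_symm j i] at this
  linarith

variable [Fintype ι]

lemma sum_exp_le_cdSum (t : ℝ) (j : ι) : ∑ i, exp (-t * d i j) ≤ cdSum d t :=
  le_ciSup (f := fun j ↦ ∑ i, exp (-t * d i j)) (Set.finite_range _).bddAbove j

lemma one_le_cdSum [Nonempty ι] (hd_self : ∀ i, d i i = 0) (t : ℝ) : 1 ≤ cdSum d t := by
  obtain ⟨j⟩ := ‹Nonempty ι›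
  calc (1 : ℝ) = exp (-t * d j j) := by rw [hd_self, mul_zero, exp_zero]
    _ ≤ ∑ i, exp (-t * d i j) :=
        single_le_sum (f := fun i ↦ exp (-t * d i j)) (fun i _ ↦ (exp_pos _).le) (mem_univ j)
    _ ≤ cdSum d t := sum_exp_le_cdSum t j

lemma abs_pow_apply_le [DecidableEq ι] {B : Matrix ι ι ℝ} {K γ : ℝ} (hγ : 0 ≤ γ)
    (hd_self : ∀ i, d i i = 0) (hd_symm : ∀ i j, d i j = d j i)
    (hd_tri : ∀ i j k, d i k ≤ d i j + d j k)
    (hB : ∀ i j, |B i j| ≤ K * exp (-γ * d i j)) (k : ℕ) (i j : ι) :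
    |(B ^ k) i j| ≤ (K * cdSum d (γ / 2)) ^ k * exp (-(γ / 2) * d i j) := by
  have hd := nonneg_of_triangle hd_self hd_symm hd_tri
  induction k generalizing j with
  | zero =>
    rcases eq_or_ne i j with rfl | hij
    · simp [hd_self]
    · simp [one_apply_ne hij, (exp_pos _).le]
  | succ k ih =>
    have hK : 0 ≤ K := by simpa [hd_self] using (abs_nonneg _).trans (hB j j)
    have hc : 0 ≤ cdSum d (γ / 2) := Real.iSup_nonneg fun _ ↦ sum_nonneg fun _ _ ↦ (exp_pos _).le
    have hexp : ∀ l, exp (-(γ / 2) * d i l) * exp (-γ * d l j)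
        ≤ exp (-(γ / 2) * d i j) * exp (-(γ / 2) * d l j) := fun l ↦ by
      rw [← exp_add, ← exp_add, exp_le_exp]
      nlinarith [hd_tri i l j, hd l j]
    calc |(B ^ (k + 1)) i j| ≤ ∑ l, |(B ^ k) i l| * |B l j| := by
          rw [pow_succ, mul_apply]
          exact (abs_sum_le_sum_abs _ _).trans_eq (by simp only [abs_mul])
      _ ≤ ∑ l, (K * cdSum d (γ / 2)) ^ k * exp (-(γ / 2) * d i l) * (K * exp (-γ * d l j)) :=
          sum_le_sum fun l _ ↦ mul_le_mul (ih l) (hB l j) (abs_nonneg _)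
            ((abs_nonneg _).trans (ih l))
      _ ≤ ∑ l, (K * cdSum d (γ / 2)) ^ k * K * exp (-(γ / 2) * d i j)
            * exp (-(γ / 2) * d l j) := sum_le_sum fun l _ ↦ by
          have := mul_le_mul_of_nonneg_left (hexp l)
            (by positivity : 0 ≤ (K * cdSum d (γ / 2)) ^ k * K)
          linarith
      _ ≤ (K * cdSum d (γ / 2)) ^ k * K * exp (-(γ / 2) * d i j) * cdSum d (γ / 2) := by
          rw [← mul_sum]
          exact mul_le_mul_of_nonneg_left (sum_exp_le_cdSum _ j) (by positivity)
      _ = (K * cdSum d (γ / 2)) ^ (k + 1) * exp (-(γ / 2) * d i j) := by ring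

end Decay

lemma abs_one_sub_smul_apply_le {ι : Type*} [Fintype ι] [DecidableEq ι] {A : Matrix ι ι ℝ}
    {d : ι → ι → ℝ} {m C γ : ℝ} (hd_self : ∀ i, d i i = 0) (hm : 0 ≤ m)
    (hA : ‖1 - m • A‖ ≤ 1) (hdecay : ∀ i j, |A i j| ≤ C * exp (-γ * d i j)) (i j : ι) :
    |(1 - m • A) i j| ≤ max 1 (m * C) * exp (-γ * d i j) := by
  rcases eq_or_ne i j with rfl | hij
  · rw [hd_self, mul_zero, exp_zero, mul_one]
    simpa only [Real.norm_eq_abs] using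
      (norm_entry_le_l2_opNorm _ i i).trans (hA.trans (le_max_left _ _))
  · rw [Matrix.sub_apply, one_apply_ne hij, Matrix.smul_apply, smul_eq_mul, zero_sub, abs_neg,
      abs_mul, abs_of_nonneg hm]
    calc m * |A i j| ≤ m * C * exp (-γ * d i j) := by
          rw [mul_assoc]; exact mul_le_mul_of_nonneg_left (hdecay i j) hm
      _ ≤ max 1 (m * C) * exp (-γ * d i j) :=
          mul_le_mul_of_nonneg_right (le_max_right _ _) (exp_pos _).le

lemma pow_le_exp_neg_mul_log_inv {ρ x : ℝ} {N : ℕ} (hρ0 : 0 ≤ ρ) (hρ1 : ρ ≤ 1) (hx : x ≤ N) :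
    ρ ^ N ≤ exp (-(x * log (1 / ρ))) := by
  rcases hρ0.eq_or_lt with rfl | hρ
  · simp [pow_le_one₀] -- `log (1 / 0) = log 0 = 0`
  · have hL : 0 ≤ log (1 / ρ) := log_nonneg (one_le_one_div hρ hρ1)
    calc ρ ^ N = exp (-(N * log (1 / ρ))) := by
          rw [one_div, log_inv, mul_neg, neg_neg, exp_nat_mul, exp_log hρ]
      _ ≤ exp (-(x * log (1 / ρ))) := by
          gcongr

lemma sum_range_ceil_pow_le_exp {q x : ℝ} (hq : 1 ≤ q) (hx : 0 ≤ x) :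
    ∑ k ∈ range ⌈x⌉₊, q ^ k ≤ exp (x * (1 + log q)) :=
  calc ∑ k ∈ range ⌈x⌉₊, q ^ k ≤ ∑ _k ∈ range ⌈x⌉₊, q ^ x := sum_le_sum fun k hk ↦ by
        rw [← rpow_natCast]
        exact rpow_le_rpow_of_exponent_le hq (Nat.lt_ceil.1 (mem_range.1 hk)).le
    _ ≤ (x + 1) * q ^ x := by
        rw [sum_const, card_range, nsmul_eq_mul]
        exact mul_le_mul_of_nonneg_right (Nat.ceil_lt_add_one hx).le (by positivity)
    _ ≤ exp x * exp (x * log q) := by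
        rw [rpow_def_of_pos (by linarith), mul_comm (log q)]
        exact mul_le_mul_of_nonneg_right (add_one_le_exp x) (exp_pos _).le
    _ = exp (x * (1 + log q)) := by rw [← exp_add]; ring_nf

lemma exists_geom_sum_mul_exp_add_pow_le {m β q ρ δ : ℝ} (hm : 0 ≤ m) (hβ : 0 ≤ β) (hq : 1 ≤ q)
    (hρ0 : 0 ≤ ρ) (hρ1 : ρ ≤ 1) (hδ : 0 ≤ δ) :
    ∃ N : ℕ, m * ((∑ k ∈ range N, q ^ k) * exp (-δ)) + β * ρ ^ N ≤
      (m + β) * exp (-(log (1 / ρ) / (1 + log q + log (1 / ρ)) * δ)) := by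
  set L := log (1 / ρ)
  set D := 1 + log q + L
  have hL : 0 ≤ L := by
    rcases hρ0.eq_or_lt with rfl | hρ
    · simp [L]
    · exact log_nonneg (one_le_one_div hρ hρ1)
  have hD : 0 < D := by have := log_nonneg hq; positivity
  have hx : 0 ≤ δ / D := div_nonneg hδ hD.le
  refine ⟨⌈δ / D⌉₊, ?_⟩
  have hsum : (∑ k ∈ range ⌈δ / D⌉₊, q ^ k) * exp (-δ) ≤ exp (-(L / D * δ)) :=
    calc (∑ k ∈ range ⌈δ / D⌉₊, q ^ k) * exp (-δ) ≤ exp (δ / D * (1 + log q)) * exp (-δ) :=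
          mul_le_mul_of_nonneg_right (sum_range_ceil_pow_le_exp hq hx) (exp_pos _).le
      _ = exp (-(L / D * δ)) := by
          rw [← exp_add]
          congr 1
          field_simp
          ring
  have hpow : ρ ^ ⌈δ / D⌉₊ ≤ exp (-(L / D * δ)) := by
    convert pow_le_exp_neg_mul_log_inv hρ0 hρ1 (Nat.le_ceil (δ / D)) using 3
    ring
  rw [add_mul]
  exact add_le_add (mul_le_mul_of_nonneg_left hsum hm) (mul_le_mul_of_nonneg_left hpow hβ)

lemma two_div_add_inv_le {a b : ℝ} (hb : 0 < b) (hba : b ≤ a) :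
    2 / (a + b) + b⁻¹ ≤ 4 / ((a + b) * (1 - (a - b) / (a + b)) ^ 2) := by
  have hab : 0 < a + b := by linarith
  have hrhs : 4 / ((a + b) * (1 - (a - b) / (a + b)) ^ 2) = (a + b) / b ^ 2 := by
    have h1r : 1 - (a - b) / (a + b) = 2 * b / (a + b) := by field_simp; ring
    rw [h1r]
    field_simp
    ring
  have hgap :
      (a + b) / b ^ 2 - (2 / (a + b) + b⁻¹) = (a - b) * (a + 2 * b) / (b ^ 2 * (a + b)) := by
    field_simp
    ring
  rw [hrhs, ← sub_nonneg, hgap]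
  exact div_nonneg (mul_nonneg (by linarith) (by linarith)) (by positivity)

section Neumann

variable {ι : Type*} [Fintype ι] [DecidableEq ι] [Nonempty ι] {d : ι → ι → ℝ}

lemma abs_apply_le_geom_sum_add_of_mul_eq_one {X A : Matrix ι ι ℝ} (h : X * A = 1) {m : ℝ}
    (hm : 0 ≤ m) (N : ℕ) (i j : ι) :
    |X i j| ≤ m * ∑ k ∈ range N, |((1 - m • A) ^ k) i j| + ‖X‖ * ‖1 - m • A‖ ^ N := by
  have hX := congrFun (congrFun (eq_smul_geom_sum_add_mul_pow h m N) i) j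
  simp only [Matrix.add_apply, Matrix.smul_apply, Matrix.sum_apply, smul_eq_mul] at hX
  rw [hX]
  refine (abs_add_le _ _).trans (add_le_add ?_ ?_)
  · rw [abs_mul, abs_of_nonneg hm]
    exact mul_le_mul_of_nonneg_left (abs_sum_le_sum_abs _ _) hm
  · calc |(X * (1 - m • A) ^ N) i j| ≤ ‖X * (1 - m • A) ^ N‖ := by
          simpa only [Real.norm_eq_abs] using norm_entry_le_l2_opNorm (𝕜 := ℝ) _ i j
      _ ≤ ‖X‖ * ‖1 - m • A‖ ^ N :=
        (l2_opNorm_mul _ _).trans (mul_le_mul_of_nonneg_left (norm_pow_le _ N) (norm_nonneg _))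

lemma abs_apply_le_exp_of_mul_eq_one {X A : Matrix ι ι ℝ} (h : X * A = 1) {m ρ K γ : ℝ}
    (hm : 0 ≤ m) (hρ0 : 0 ≤ ρ) (hρ1 : ρ ≤ 1) (hB : ‖1 - m • A‖ ≤ ρ) (hK : 1 ≤ K) (hγ : 0 ≤ γ)
    (hd_self : ∀ i, d i i = 0) (hd_symm : ∀ i j, d i j = d j i)
    (hd_tri : ∀ i j k, d i k ≤ d i j + d j k)
    (hdecay : ∀ i j, |(1 - m • A) i j| ≤ K * exp (-γ * d i j)) (i j : ι) :
    |X i j| ≤ (m + ‖X‖) * exp (-(log (1 / ρ) /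
      (1 + log (K * cdSum d (γ / 2)) + log (1 / ρ)) * (γ / 2 * d i j))) := by
  obtain ⟨N, hN⟩ := exists_geom_sum_mul_exp_add_pow_le (δ := γ / 2 * d i j) hm (norm_nonneg X)
    (one_le_mul_of_one_le_of_one_le hK (one_le_cdSum hd_self (γ / 2))) hρ0 hρ1
    (mul_nonneg (by positivity) (nonneg_of_triangle hd_self hd_symm hd_tri i j))
  refine (abs_apply_le_geom_sum_add_of_mul_eq_one h hm N i j).trans (le_trans ?_ hN)
  rw [sum_mul]
  gcongr with k
  simpa only [neg_mul] using abs_pow_apply_le hγ hd_self hd_symm hd_tri hdecay k i j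

end Neumann

lemma euclOpNorm_eq_l2_opNorm {ι : Type*} [Fintype ι] [DecidableEq ι] (A : Matrix ι ι ℝ) :
    euclOpNorm A = ‖A‖ :=
  rfl

theorem inverse_of_exponentially_decaying_matrix_general
    {I : Type*} [Fintype I] [DecidableEq I] [Nonempty I]
    (d : I → I → ℝ)
    (hd_self : ∀ i, d i i = 0)
    (hd_symm : ∀ i j, d i j = d j i)
    (hd_tri : ∀ i j k, d i k ≤ d i j + d j k)
    (A : Matrix I I ℝ) (hA : A.PosDef)
    (C γ : ℝ) (hγ : 0 < γ)
    (hdecay : ∀ i j, |A i j| ≤ C * Real.exp (-γ * d i j))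
    (κ r CR : ℝ)
    (hκ : κ = euclOpNorm A * euclOpNorm A⁻¹)
    (hr : r = (1 - κ⁻¹) / (1 + κ⁻¹))
    (hCR : CR = max 1 (2 * C / (euclOpNorm A + (euclOpNorm A⁻¹)⁻¹))) :
    ∀ i j, |A⁻¹ i j| ≤
      4 / ((euclOpNorm A + (euclOpNorm A⁻¹)⁻¹) * (1 - r) ^ 2) *
        Real.exp (-(Real.log (1 / r) /
            (1 + Real.log (cdSum d (γ / 2)) + Real.log CR + Real.log (1 / r))) *
          (γ / 2) * d i j) := by
  intro i j
  simp only [euclOpNorm_eq_l2_opNorm] at hκ hCR ⊢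
  set a := ‖A‖
  set b := ‖A⁻¹‖⁻¹
  have hb : 0 < b := inv_pos.2 hA.l2_opNorm_inv_pos
  have hba : b ≤ a := hA.l2_opNorm_inv_inv_le
  have hβ : ‖A⁻¹‖ = b⁻¹ := (inv_inv _).symm
  have hr' : r = (a - b) / (a + b) := by
    have ha : 0 < a := hb.trans_le hba
    rw [hr, hκ, hβ]
    field_simp
  have hr0 : 0 ≤ r := by rw [hr']; exact div_nonneg (by linarith) (by linarith)
  have hr1 : r ≤ 1 := by rw [hr', div_le_one (by linarith)]; linarith
  have hB : ‖1 - (2 / (a + b)) • A‖ ≤ r := hr' ▸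
    norm_one_sub_smul_le_of_spectrum_subset_Icc hA.isHermitian hb hba hA.spectrum_subset_Icc
  have hCR' : CR = max 1 (2 / (a + b) * C) := by rw [hCR]; congr 1; ring
  have hCR1 : 1 ≤ CR := hCR'.ge.trans' (le_max_left _ _)
  have hdecayB := hCR' ▸ abs_one_sub_smul_apply_le hd_self (by positivity) (hB.trans hr1) hdecay
  calc |A⁻¹ i j| ≤ (2 / (a + b) + ‖A⁻¹‖) * exp (-(log (1 / r) /
        (1 + log (CR * cdSum d (γ / 2)) + log (1 / r)) * (γ / 2 * d i j))) :=
        abs_apply_le_exp_of_mul_eq_one (nonsing_inv_mul A hA.det_pos.ne'.isUnit) (by positivity)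
          hr0 hr1 hB hCR1 hγ.le hd_self hd_symm hd_tri hdecayB i j
    _ = (2 / (a + b) + b⁻¹) * exp (-(log (1 / r) /
          (1 + log (cdSum d (γ / 2)) + log CR + log (1 / r))) * (γ / 2) * d i j) := by
        rw [hβ, log_mul (by linarith) (by linarith [one_le_cdSum hd_self (γ / 2)])]
        ring_nf
    _ ≤ _ := by
        gcongr
        rw [hr']
        exact two_div_add_inv_le hb hba

/-- The inverse of a well-conditioned symmetric positive definite
matrix with exponentially decaying entries decays exponentially. -/
theorem inverse_of_exponentially_decaying_matrix
    {I : Type*} [Fintype I] [DecidableEq I] [Nonempty I]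
    (d : I → I → ℝ)
    (hd_self : ∀ i, d i i = 0)
    (hd_symm : ∀ i j, d i j = d j i)
    (hd_tri : ∀ i j k, d i k ≤ d i j + d j k)
    (hd_sep : ∀ i j, d i j = 0 → i = j)
    (A : Matrix I I ℝ) (hA : A.PosDef)
    (C γ : ℝ) (hC : 0 < C) (hγ : 0 < γ)
    (hdecay : ∀ i j, |A i j| ≤ C * Real.exp (-γ * d i j))
    (κ r CR : ℝ)
    (hκ : κ = euclOpNorm A * euclOpNorm A⁻¹)
    (hr : r = (1 - κ⁻¹) / (1 + κ⁻¹))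
    (hCR : CR = max 1 (2 * C / (euclOpNorm A + (euclOpNorm A⁻¹)⁻¹))) :
    ∀ i j, |A⁻¹ i j| ≤
      4 / ((euclOpNorm A + (euclOpNorm A⁻¹)⁻¹) * (1 - r) ^ 2) *
        Real.exp (-(Real.log (1 / r) /
            (1 + Real.log (cdSum d (γ / 2)) + Real.log CR + Real.log (1 / r))) *
          (γ / 2) * d i j) :=
  inverse_of_exponentially_decaying_matrix_general d hd_self hd_symm hd_tri A hA C γ hγ hdecay κ r
    CR hκ hr hCR
end

section
/- Let I be a finite totally ordered index set partitioned into consecutive blocks I = J⁽¹⁾ ∪ ⋯ ∪ J⁽q⁾, and let L ∈ ℝ^{I×I} be block lower triangular with respect to this partition with identity matrices as diagonal blocks (L_{k,k} = Id and L_{k,l} = 0 for k < l). Let d be a hierarchical pseudometric on I and suppose |L_{ij}| ≤ C exp(−γ d(i,j)) for all i,j ∈ I, for some C ≥ 1 and γ > 0. Then L is invertible and |(L⁻¹)_{ij}| ≤ 2^q · (c_d(γ/2) · C)^q · exp(−(γ/2) d(i,j)) for all i, j ∈ I, where c_d(γ) := sup_{1 ≤ k ≤ l ≤ q} sup_{j∈J⁽ˡ⁾}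 Σ_{i∈J⁽ᵏ⁾} exp(−γ d(i,j)). -/
open Matrix

/-- A hierarchical pseudometric relative to the block structure `blk : Fin N → Fin q`:
nonnegative, vanishing on the diagonal, symmetric, and satisfying the ordered
triangle inequality `d(i,j) ≤ d(i,s) + d(s,j)` whenever `blk i ≤ blk s ≤ blk j`
(this includes the pseudometric triangle inequality within each block). -/
def IsHierPseudoMetric {N q : ℕ} (blk : Fin N → Fin q) (d : Fin N → Fin N → ℝ) : Prop :=
  (∀ i j, 0 ≤ d i j) ∧ (∀ i, d i i = 0) ∧ (∀ i j, d i j = d j i) ∧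
    (∀ i s j, blk i ≤ blk s → blk s ≤ blk j → d i j ≤ d i s + d s j)

/-- `c_d(t) := sup_{1 ≤ k ≤ l ≤ q} sup_{j ∈ J⁽ˡ⁾} Σ_{i ∈ J⁽ᵏ⁾} exp(−t d(i,j))`. -/
noncomputable def cdBlocks {N q : ℕ} (blk : Fin N → Fin q) (d : Fin N → Fin N → ℝ)
    (t : ℝ) : ℝ :=
  ⨆ k : Fin q, ⨆ j : {j : Fin N // k ≤ blk j},
    ∑ i ∈ Finset.univ.filter fun i : Fin N => blk i = k, Real.exp (-t * d i j.1)

private lemma auxMain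
    {N q : ℕ} (blk : Fin N → Fin q)
    (d : Fin N → Fin N → ℝ)
    (hdd : ∀ i, d i i = 0) (hdsymm : ∀ i j, d i j = d j i)
    (hdtri : ∀ i s j, blk i ≤ blk s → blk s ≤ blk j → d i j ≤ d i s + d s j)
    (L : Matrix (Fin N) (Fin N) ℝ)
    (hL_tri : ∀ i j : Fin N, blk i < blk j → L i j = 0)
    (hL_diag : ∀ i j : Fin N, blk i = blk j → L i j = if i = j then 1 else 0)
    (C γ : ℝ) (hC : 1 ≤ C) (hγ : 0 < γ)
    (hdecay : ∀ i j, |L i j| ≤ C * Real.exp (-γ * d i j))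
    (c t : ℝ) (ht : t = γ / 2)
    (hcsum : ∀ (k : Fin q) (j0 : Fin N), k ≤ blk j0 →
      (∑ i ∈ Finset.univ.filter fun i : Fin N => blk i = k, Real.exp (-t * d i j0)) ≤ c)
    (hc1 : ∀ _ : Fin N, 1 ≤ c) :
    IsUnit L ∧
    ∀ i j, |L⁻¹ i j| ≤ 2 ^ q * (c * C) ^ q * Real.exp (-t * d i j) := by
  classical
  have ht0 : 0 < t := by rw [ht]; positivity
  set M : Matrix (Fin N) (Fin N) ℝ := L - 1 with hMdefn
  have hMdef : ∀ i j, M i j = L i j - (if i = j then 1 else 0) := by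
    intro i j; simp [hMdefn, Matrix.sub_apply, Matrix.one_apply]
  have hMzero : ∀ i j, blk i ≤ blk j → M i j = 0 := by
    intro i j h
    rcases lt_or_eq_of_le h with h | h
    · have hij : i ≠ j := fun e => by subst e; exact lt_irrefl _ h
      rw [hMdef, hL_tri i j h, if_neg hij, sub_zero]
    · rw [hMdef, hL_diag i j h, sub_self]
  have hMbound : ∀ i j, |M i j| ≤ C * (Real.exp (-t * d i j) * Real.exp (-t * d i j)) := by
    intro i j
    have hexp : Real.exp (-t * d i j) * Real.exp (-t * d i j) = Real.exp (-γ * d i j) := by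
      rw [← Real.exp_add]; congr 1; rw [ht]; ring
    rw [hexp]
    rcases le_or_gt (blk i) (blk j) with h | h
    · rw [hMzero i j h, abs_zero]; positivity
    · have hij : i ≠ j := fun e => by subst e; exact lt_irrefl _ h
      rw [hMdef, if_neg hij, sub_zero]; exact hdecay i j
  have hpow : ∀ n, ∀ i j : Fin N, (M ^ n) i j ≠ 0 → (blk j : ℕ) + n ≤ (blk i : ℕ) := by
    intro n
    induction n with
    | zero =>
      intro i j h
      rw [pow_zero, Matrix.one_apply] at h
      rcases eq_or_ne i j with rfl | hne
      · omega
      · simp [hne] at h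
    | succ n ih =>
      intro i j h
      rw [pow_succ', Matrix.mul_apply] at h
      obtain ⟨s, -, hs⟩ := Finset.exists_ne_zero_of_sum_ne_zero h
      have h1 : M i s ≠ 0 := fun e => hs (by rw [e, zero_mul])
      have h2 : (M ^ n) s j ≠ 0 := fun e => hs (by rw [e, mul_zero])
      have hsi : blk s < blk i := by
        by_contra hcon
        exact h1 (hMzero i s (not_lt.mp hcon))
      have h3 := ih s j h2
      have h4 := Fin.lt_iff_val_lt_val.mp hsi
      omega
  have hMq : M ^ q = 0 := by
    ext i j
    rw [Matrix.zero_apply]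
    by_contra h
    have h1 := hpow q i j h
    have h2 := (blk i).isLt
    omega
  set S : Matrix (Fin N) (Fin N) ℝ := ∑ n ∈ Finset.range q, (-M) ^ n with hSdefn
  have hnegMq : (-M) ^ q = 0 := by rw [neg_pow, hMq, mul_zero]
  have hL1 : L = 1 + M := by rw [hMdefn]; abel
  have hLS : L * S = 1 := by
    have h := mul_geom_sum (-M) q
    rw [hnegMq, zero_sub, ← hSdefn] at h
    have h2 : (-M - 1) = -L := by rw [hL1]; abel
    rw [h2, neg_mul] at h
    exact neg_injective h
  have hSL : S * L = 1 := by
    have h := geom_sum_mul (-M) q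
    rw [hnegMq, zero_sub, ← hSdefn] at h
    have h2 : (-M - 1) = -L := by rw [hL1]; abel
    rw [h2, mul_neg] at h
    exact neg_injective h
  have hUnit : IsUnit L := ⟨⟨L, S, hLS, hSL⟩, rfl⟩
  have hSinv : L⁻¹ = S := Matrix.inv_eq_right_inv hLS
  have hSrec : S = 1 - M * S := by
    have h : (1 + M) * S = 1 := by rw [← hL1]; exact hLS
    rw [add_mul, one_mul] at h
    exact (eq_sub_of_add_eq h)
  have hrec : ∀ i j, S i j = (if i = j then (1:ℝ) else 0) - ∑ s, M i s * S s j := by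
    intro i j
    conv_lhs => rw [hSrec]
    simp [Matrix.sub_apply, Matrix.one_apply, Matrix.mul_apply]
  -- main induction
  have key : ∀ n : ℕ, ∀ i : Fin N, (blk i : ℕ) = n → ∀ j,
      (blk i < blk j → S i j = 0) ∧
      |S i j| ≤ (1 + c * C) ^ ((blk i : ℕ) - (blk j : ℕ)) * Real.exp (-t * d i j) := by
    intro n
    induction n using Nat.strong_induction_on with
    | _ n ih =>
    intro i hi j
    have hc1' : 1 ≤ c := hc1 i
    have hcC1 : (1:ℝ) ≤ c * C := by nlinarith
    have hvanish : blk i < blk j → S i j = 0 := by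
      intro hij
      rw [hrec i j]
      have hne : i ≠ j := fun e => by subst e; exact lt_irrefl _ hij
      rw [if_neg hne]
      have hsum0 : (∑ s, M i s * S s j) = 0 := by
        apply Finset.sum_eq_zero
        intro s _
        by_cases hs : blk s < blk i
        · have hlt : (blk s : ℕ) < n := by
            rw [← hi]; exact Fin.lt_iff_val_lt_val.mp hs
          rw [(ih (blk s) hlt s rfl j).1 (lt_trans hs hij), mul_zero]
        · rw [hMzero i s (not_lt.mp hs), zero_mul]
      rw [hsum0, sub_zero]
    refine ⟨hvanish, ?_⟩
    set x : ℝ := 1 + c * C with hxdef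
    have hx1 : (1:ℝ) ≤ x := by rw [hxdef]; nlinarith
    have hx0 : (0:ℝ) ≤ x := le_trans zero_le_one hx1
    set Mij : ℕ := (blk i : ℕ) - (blk j : ℕ) with hMij
    set E : ℝ := Real.exp (-t * d i j) with hE
    have hE0 : 0 < E := Real.exp_pos _
    rw [hrec i j]
    have hδ : |if i = j then (1:ℝ) else 0| ≤ E := by
      rcases eq_or_ne i j with rfl | hne
      · rw [if_pos rfl, abs_one, hE, hdd, mul_zero, Real.exp_zero]
      · rw [if_neg hne, abs_zero]; exact le_of_lt hE0
    have hsum : |∑ s, M i s * S s j| ≤ (x ^ Mij - 1) * E := by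
      set F : Finset (Fin N) := Finset.univ.filter (fun s => blk j ≤ blk s ∧ blk s < blk i) with hF
      have hrestrict : (∑ s ∈ F, M i s * S s j) = ∑ s, M i s * S s j := by
        apply Finset.sum_subset (Finset.subset_univ F)
        intro s _ hs
        rw [hF, Finset.mem_filter] at hs
        by_cases h1 : blk s < blk i
        · have h2 : blk s < blk j := by
            by_contra hcon
            exact hs ⟨Finset.mem_univ s, not_lt.mp hcon, h1⟩
          have hlt : (blk s : ℕ) < n := by
            rw [← hi]; exact Fin.lt_iff_val_lt_val.mp h1
          rw [(ih (blk s) hlt s rfl j).1 h2, mul_zero]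
        · rw [hMzero i s (not_lt.mp h1), zero_mul]
      rw [← hrestrict]
      have hC0 : (0:ℝ) ≤ C := le_trans zero_le_one hC
      have hpt : ∀ s ∈ F, |M i s * S s j| ≤
          (C * E) * (x ^ ((blk s : ℕ) - (blk j : ℕ)) * Real.exp (-t * d i s)) := by
        intro s hsF
        rw [hF, Finset.mem_filter] at hsF
        obtain ⟨-, hjs, hsi⟩ := hsF
        have hlt : (blk s : ℕ) < n := by
          rw [← hi]; exact Fin.lt_iff_val_lt_val.mp hsi
        have hSb := (ih (blk s) hlt s rfl j).2
        have htri : d i j ≤ d i s + d s j := by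
          have h := hdtri j s i hjs (le_of_lt hsi)
          rw [hdsymm j i, hdsymm j s, hdsymm s i] at h
          linarith
        have hEprod : Real.exp (-t * d i s) * Real.exp (-t * d s j) ≤ E := by
          rw [hE, ← Real.exp_add]
          apply Real.exp_le_exp.mpr
          nlinarith [ht0.le]
        have hxm0 : (0:ℝ) ≤ x ^ ((blk s : ℕ) - (blk j : ℕ)) := pow_nonneg hx0 _
        have hEs0 : (0:ℝ) < Real.exp (-t * d i s) := Real.exp_pos _
        calc |M i s * S s j| = |M i s| * |S s j| := abs_mul _ _
          _ ≤ (C * (Real.exp (-t * d i s) * Real.exp (-t * d i s))) *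
              (x ^ ((blk s : ℕ) - (blk j : ℕ)) * Real.exp (-t * d s j)) := by
              apply mul_le_mul (hMbound i s) hSb (abs_nonneg _) (by positivity)
          _ = (C * x ^ ((blk s : ℕ) - (blk j : ℕ)) * Real.exp (-t * d i s)) *
              (Real.exp (-t * d i s) * Real.exp (-t * d s j)) := by ring
          _ ≤ (C * x ^ ((blk s : ℕ) - (blk j : ℕ)) * Real.exp (-t * d i s)) * E := by
              apply mul_le_mul_of_nonneg_left hEprod
              exact mul_nonneg (mul_nonneg hC0 hxm0) hEs0.le
          _ = (C * E) * (x ^ ((blk s : ℕ) - (blk j : ℕ)) * Real.exp (-t * d i s)) := by ring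
      have hfib : (∑ s ∈ F, x ^ ((blk s : ℕ) - (blk j : ℕ)) * Real.exp (-t * d i s))
          ≤ ∑ m ∈ Finset.range Mij, x ^ m * c := by
        have hmaps : ∀ s ∈ F, ((blk s : ℕ) - (blk j : ℕ)) ∈ Finset.range Mij := by
          intro s hs
          rw [hF, Finset.mem_filter] at hs
          obtain ⟨-, hjs, hsi⟩ := hs
          rw [Finset.mem_range, hMij]
          have h1 := Fin.lt_iff_val_lt_val.mp hsi
          have h2 := Fin.le_def.mp hjs
          omega
        rw [← Finset.sum_fiberwise_of_maps_to hmaps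
          (fun s => x ^ ((blk s : ℕ) - (blk j : ℕ)) * Real.exp (-t * d i s))]
        apply Finset.sum_le_sum
        intro m hm
        rcases Finset.eq_empty_or_nonempty
            (F.filter fun s => (blk s : ℕ) - (blk j : ℕ) = m) with he | ⟨s0, hs0⟩
        · rw [he, Finset.sum_empty]
          exact mul_nonneg (pow_nonneg hx0 _) (le_trans zero_le_one hc1')
        · have hs0' := Finset.mem_filter.mp hs0
          have hs0F := Finset.mem_filter.mp (hF ▸ hs0'.1)
          have hk_le : blk s0 ≤ blk i := le_of_lt hs0F.2.2
          have hsub : (F.filter fun s => (blk s : ℕ) - (blk j : ℕ) = m) ⊆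
              Finset.univ.filter fun s => blk s = blk s0 := by
            intro s hs
            have hs' := Finset.mem_filter.mp hs
            have hsF := Finset.mem_filter.mp (hF ▸ hs'.1)
            rw [Finset.mem_filter]
            refine ⟨Finset.mem_univ _, Fin.ext ?_⟩
            have h1 := Fin.le_def.mp hsF.2.1
            have h2 := Fin.le_def.mp hs0F.2.1
            have h3 := hs'.2
            have h4 := hs0'.2
            omega
          have hinner : (∑ s ∈ F.filter fun s => (blk s : ℕ) - (blk j : ℕ) = m,
              Real.exp (-t * d i s)) ≤ c := by
            refine le_trans (Finset.sum_le_sum_of_subset_of_nonneg hsub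
              (fun _ _ _ => (Real.exp_pos _).le)) ?_
            have heq : (∑ s ∈ Finset.univ.filter fun s => blk s = blk s0,
                Real.exp (-t * d i s)) = ∑ s ∈ Finset.univ.filter fun s => blk s = blk s0,
                Real.exp (-t * d s i) :=
              Finset.sum_congr rfl (fun s _ => by rw [hdsymm])
            rw [heq]
            exact hcsum (blk s0) i hk_le
          calc (∑ s ∈ F.filter fun s => (blk s : ℕ) - (blk j : ℕ) = m,
                x ^ ((blk s : ℕ) - (blk j : ℕ)) * Real.exp (-t * d i s))
              = ∑ s ∈ F.filter fun s => (blk s : ℕ) - (blk j : ℕ) = m,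
                x ^ m * Real.exp (-t * d i s) :=
                Finset.sum_congr rfl (fun s hs => by rw [(Finset.mem_filter.mp hs).2])
            _ = x ^ m * ∑ s ∈ F.filter fun s => (blk s : ℕ) - (blk j : ℕ) = m,
                Real.exp (-t * d i s) := by rw [Finset.mul_sum]
            _ ≤ x ^ m * c := mul_le_mul_of_nonneg_left hinner (pow_nonneg hx0 _)
      have hgeo := geom_sum_mul x Mij
      have hCE0 : (0:ℝ) ≤ C * E := mul_nonneg hC0 hE0.le
      calc |∑ s ∈ F, M i s * S s j|
          ≤ ∑ s ∈ F, |M i s * S s j| := Finset.abs_sum_le_sum_abs _ _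
        _ ≤ ∑ s ∈ F, (C * E) * (x ^ ((blk s : ℕ) - (blk j : ℕ)) * Real.exp (-t * d i s)) :=
            Finset.sum_le_sum hpt
        _ = (C * E) * ∑ s ∈ F, x ^ ((blk s : ℕ) - (blk j : ℕ)) * Real.exp (-t * d i s) := by
            rw [Finset.mul_sum]
        _ ≤ (C * E) * ∑ m ∈ Finset.range Mij, x ^ m * c :=
            mul_le_mul_of_nonneg_left hfib hCE0
        _ = ((∑ m ∈ Finset.range Mij, x ^ m) * (x - 1)) * E := by
            rw [← Finset.sum_mul]
            rw [show x - 1 = c * C by rw [hxdef]; ring]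
            ring
        _ = (x ^ Mij - 1) * E := by rw [hgeo]
    calc |(if i = j then (1:ℝ) else 0) - ∑ s, M i s * S s j|
        ≤ |if i = j then (1:ℝ) else 0| + |∑ s, M i s * S s j| := abs_sub _ _
      _ ≤ E + (x ^ Mij - 1) * E := add_le_add hδ hsum
      _ = x ^ Mij * E := by ring
  refine ⟨hUnit, ?_⟩
  intro i j
  rw [hSinv]
  have hb := (key (blk i) i rfl j).2
  have hc1' : 1 ≤ c := hc1 i
  have hcC1 : (1:ℝ) ≤ c * C := by nlinarith
  have hE0 : (0:ℝ) < Real.exp (-t * d i j) := Real.exp_pos _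
  have hx : (1 + c * C) ^ ((blk i : ℕ) - (blk j : ℕ)) ≤ 2 ^ q * (c * C) ^ q := by
    have h1 : (1 + c * C) ^ ((blk i : ℕ) - (blk j : ℕ)) ≤ (1 + c * C) ^ q := by
      apply pow_le_pow_right₀ (by nlinarith)
      have := (blk i).isLt; omega
    have h2 : (1 + c * C) ^ q ≤ (2 * (c * C)) ^ q :=
      pow_le_pow_left₀ (by nlinarith) (by nlinarith) q
    calc (1 + c * C) ^ ((blk i : ℕ) - (blk j : ℕ)) ≤ (2 * (c * C)) ^ q := le_trans h1 h2
      _ = 2 ^ q * (c * C) ^ q := mul_pow _ _ _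
  calc |S i j| ≤ (1 + c * C) ^ ((blk i : ℕ) - (blk j : ℕ)) * Real.exp (-t * d i j) := hb
    _ ≤ 2 ^ q * (c * C) ^ q * Real.exp (-t * d i j) :=
        mul_le_mul_of_nonneg_right hx (le_of_lt hE0)


/-- The inverse of an exponentially decaying block
lower-triangular matrix with identity diagonal blocks decays exponentially. -/
theorem inverse_of_block_unitriangular_decays
    {N q : ℕ} (blk : Fin N → Fin q) (hblk : Monotone blk)
    (d : Fin N → Fin N → ℝ) (hd : IsHierPseudoMetric blk d)
    (L : Matrix (Fin N) (Fin N) ℝ)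
    (hL_tri : ∀ i j : Fin N, blk i < blk j → L i j = 0)
    (hL_diag : ∀ i j : Fin N, blk i = blk j → L i j = if i = j then 1 else 0)
    (C γ : ℝ) (hC : 1 ≤ C) (hγ : 0 < γ)
    (hdecay : ∀ i j, |L i j| ≤ C * Real.exp (-γ * d i j)) :
    IsUnit L ∧
    ∀ i j, |L⁻¹ i j| ≤
      2 ^ q * (cdBlocks blk d (γ / 2) * C) ^ q * Real.exp (-(γ / 2) * d i j) := by
  obtain ⟨hd0, hdd, hdsymm, hdtri⟩ := hd
  have hcsum : ∀ (k : Fin q) (j0 : Fin N), k ≤ blk j0 →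
      (∑ i ∈ Finset.univ.filter fun i : Fin N => blk i = k,
        Real.exp (-(γ / 2) * d i j0)) ≤ cdBlocks blk d (γ / 2) := by
    intro k j0 hk
    have h1 : (∑ i ∈ Finset.univ.filter fun i : Fin N => blk i = k,
        Real.exp (-(γ / 2) * d i j0)) ≤
        ⨆ j : {j : Fin N // k ≤ blk j}, ∑ i ∈ Finset.univ.filter fun i : Fin N => blk i = k,
          Real.exp (-(γ / 2) * d i j.1) :=
      le_ciSup (f := fun j : {j : Fin N // k ≤ blk j} =>
        ∑ i ∈ Finset.univ.filter fun i : Fin N => blk i = k, Real.exp (-(γ / 2) * d i j.1))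
        (Set.Finite.bddAbove (Set.finite_range _)) ⟨j0, hk⟩
    rw [cdBlocks]
    exact h1.trans (le_ciSup (f := fun k : Fin q => ⨆ j : {j : Fin N // k ≤ blk j},
      ∑ i ∈ Finset.univ.filter fun i : Fin N => blk i = k, Real.exp (-(γ / 2) * d i j.1))
      (Set.Finite.bddAbove (Set.finite_range _)) k)
  have hc1 : ∀ _ : Fin N, 1 ≤ cdBlocks blk d (γ / 2) := by
    intro j0
    refine le_trans ?_ (hcsum (blk j0) j0 le_rfl)
    have hmem : j0 ∈ Finset.univ.filter (fun i : Fin N => blk i = blk j0) := by simp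
    have h := Finset.single_le_sum (f := fun i => Real.exp (-(γ / 2) * d i j0))
      (fun i _ => (Real.exp_pos _).le) hmem
    simpa [hdd j0] using h
  exact auxMain blk d hdd hdsymm hdtri L hL_tri hL_diag C γ hC hγ hdecay
    (cdBlocks blk d (γ / 2)) (γ / 2) rfl hcsum hc1
end

section
/- Let I be a finite index set with #I = N, let d : I × I → ℝ≥0 be any function, and let L ∈ ℝ^{I×I} satisfy |L_{ij}| ≤ C exp(−γ d(i,j)) for all i,j ∈ I, for some constants C, γ > 0. Given ρ > 0 and a set S ⊆ I×I with S ⊇ {(i,j) : d(i,j) ≤ ρ}, define the truncation L^S by L^S_{ij} := L_{ij} if (i,j) ∈ S and L^S_{ij} := 0 otherwise. Then the Frobenius norm of the factorization error satisfies ‖L Lᵀ − L^S (L^S)ᵀ‖_Fro ≤ C² N² exp(−γ ρ). In particular, if Θ = LLᵀ, then for any ε > 0 choosing ρ ≥ γ⁻¹ log(C² N² / ε) gives ‖Θ − L^S (L^S)ᵀ‖_Fro ≤ ε. -/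
open Matrix

/-- The truncation `L^S` of a matrix `L` to a sparsity set `S`. -/
def truncMat {I : Type*} (L : Matrix I I ℝ) (S : Set (I × I)) [DecidablePred (· ∈ S)] :
    Matrix I I ℝ :=
  fun i j => if (i, j) ∈ S then L i j else 0

/-- Truncating an exponentially decaying factor `L` to a sparsity
set `S` containing `{(i,j) : d(i,j) ≤ ρ}` perturbs `L Lᵀ` by at most
`C² N² exp(−γρ)` in the Frobenius norm; consequently `ρ ≥ γ⁻¹ log(C²N²/ε)` gives
accuracy `ε`. -/
theorem truncation_error_frobenius
    {I : Type*} [Fintype I] (N : ℕ) (hN : Fintype.card I = N)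
    (d : I → I → ℝ) (hd : ∀ i j, 0 ≤ d i j)
    (L : Matrix I I ℝ) (C γ : ℝ) (hC : 0 < C) (hγ : 0 < γ)
    (hdecay : ∀ i j, |L i j| ≤ C * Real.exp (-γ * d i j))
    (ρ : ℝ) (hρ : 0 < ρ)
    (S : Set (I × I)) [DecidablePred (· ∈ S)]
    (hS : {p : I × I | d p.1 p.2 ≤ ρ} ⊆ S) :
    Real.sqrt (∑ i : I, ∑ j : I,
        ((L * Lᵀ - truncMat L S * (truncMat L S)ᵀ) i j) ^ 2) ≤
      C ^ 2 * (N : ℝ) ^ 2 * Real.exp (-γ * ρ) ∧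
    ∀ ε : ℝ, 0 < ε → γ⁻¹ * Real.log (C ^ 2 * (N : ℝ) ^ 2 / ε) ≤ ρ →
      Real.sqrt (∑ i : I, ∑ j : I,
          ((L * Lᵀ - truncMat L S * (truncMat L S)ᵀ) i j) ^ 2) ≤ ε := by
  set T := truncMat L S with hT
  have hexp : (0:ℝ) < Real.exp (-γ * ρ) := Real.exp_pos _
  have hB : (0:ℝ) ≤ C ^ 2 * Real.exp (-γ * ρ) := by positivity
  have hLC : ∀ i j, |L i j| ≤ C := by
    intro i j
    refine (hdecay i j).trans ?_
    have h1 : Real.exp (-γ * d i j) ≤ 1 := Real.exp_le_one_iff.mpr (by nlinarith [hd i j])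
    nlinarith
  have hLe : ∀ i j, ρ < d i j → |L i j| ≤ C * Real.exp (-γ * ρ) := by
    intro i j hij
    refine (hdecay i j).trans ?_
    have : Real.exp (-γ * d i j) ≤ Real.exp (-γ * ρ) := Real.exp_le_exp.mpr (by nlinarith)
    nlinarith
  have hterm : ∀ i j k : I, |L i k * L j k - T i k * T j k| ≤ C ^ 2 * Real.exp (-γ * ρ) := by
    intro i j k
    by_cases h1 : (i, k) ∈ S <;> by_cases h2 : (j, k) ∈ S
    · simp only [hT, truncMat, h1, h2, if_pos]
      simpa using hB
    · have hd2 : ρ < d j k := lt_of_not_ge fun h => h2 (hS h)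
      simp only [hT, truncMat, h1, h2, if_pos, if_neg, not_false_iff, mul_zero, sub_zero]
      calc |L i k * L j k| = |L i k| * |L j k| := abs_mul _ _
        _ ≤ C * (C * Real.exp (-γ * ρ)) :=
            mul_le_mul (hLC i k) (hLe j k hd2) (abs_nonneg _) hC.le
        _ = C ^ 2 * Real.exp (-γ * ρ) := by ring
    · have hd1 : ρ < d i k := lt_of_not_ge fun h => h1 (hS h)
      simp only [hT, truncMat, h1, h2, if_pos, if_neg, not_false_iff, zero_mul, sub_zero]
      calc |L i k * L j k| = |L i k| * |L j k| := abs_mul _ _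
        _ ≤ (C * Real.exp (-γ * ρ)) * C :=
            mul_le_mul (hLe i k hd1) (hLC j k) (abs_nonneg _) (by positivity)
        _ = C ^ 2 * Real.exp (-γ * ρ) := by ring
    · have hd1 : ρ < d i k := lt_of_not_ge fun h => h1 (hS h)
      simp only [hT, truncMat, h1, h2, if_neg, not_false_iff, zero_mul, sub_zero]
      calc |L i k * L j k| = |L i k| * |L j k| := abs_mul _ _
        _ ≤ (C * Real.exp (-γ * ρ)) * C :=
            mul_le_mul (hLe i k hd1) (hLC j k) (abs_nonneg _) (by positivity)
        _ = C ^ 2 * Real.exp (-γ * ρ) := by ring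
  have hentry : ∀ i j : I, |(L * Lᵀ - T * Tᵀ) i j| ≤ (N : ℝ) * (C ^ 2 * Real.exp (-γ * ρ)) := by
    intro i j
    have heq : (L * Lᵀ - T * Tᵀ) i j = ∑ k : I, (L i k * L j k - T i k * T j k) := by
      simp [Matrix.sub_apply, Matrix.mul_apply, Matrix.transpose_apply, Finset.sum_sub_distrib]
    rw [heq]
    calc |∑ k : I, (L i k * L j k - T i k * T j k)|
        ≤ ∑ k : I, |L i k * L j k - T i k * T j k| := Finset.abs_sum_le_sum_abs _ _
      _ ≤ ∑ _k : I, C ^ 2 * Real.exp (-γ * ρ) :=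
          Finset.sum_le_sum fun k _ => hterm i j k
      _ = (N : ℝ) * (C ^ 2 * Real.exp (-γ * ρ)) := by
          rw [Finset.sum_const, Finset.card_univ, hN, nsmul_eq_mul]
  have hmain : Real.sqrt (∑ i : I, ∑ j : I, ((L * Lᵀ - T * Tᵀ) i j) ^ 2) ≤
      C ^ 2 * (N : ℝ) ^ 2 * Real.exp (-γ * ρ) := by
    have hsum : ∑ i : I, ∑ j : I, ((L * Lᵀ - T * Tᵀ) i j) ^ 2 ≤
        (C ^ 2 * (N : ℝ) ^ 2 * Real.exp (-γ * ρ)) ^ 2 := by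
      calc ∑ i : I, ∑ j : I, ((L * Lᵀ - T * Tᵀ) i j) ^ 2
          ≤ ∑ _i : I, ∑ _j : I, ((N : ℝ) * (C ^ 2 * Real.exp (-γ * ρ))) ^ 2 := by
            refine Finset.sum_le_sum fun i _ => Finset.sum_le_sum fun j _ => ?_
            have h := hentry i j
            nlinarith [abs_nonneg ((L * Lᵀ - T * Tᵀ) i j),
              sq_abs ((L * Lᵀ - T * Tᵀ) i j)]
        _ = (C ^ 2 * (N : ℝ) ^ 2 * Real.exp (-γ * ρ)) ^ 2 := by
            simp only [Finset.sum_const, Finset.card_univ, hN, nsmul_eq_mul]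
            ring
    calc Real.sqrt (∑ i : I, ∑ j : I, ((L * Lᵀ - T * Tᵀ) i j) ^ 2)
        ≤ Real.sqrt ((C ^ 2 * (N : ℝ) ^ 2 * Real.exp (-γ * ρ)) ^ 2) :=
          Real.sqrt_le_sqrt hsum
      _ = C ^ 2 * (N : ℝ) ^ 2 * Real.exp (-γ * ρ) := Real.sqrt_sq (by positivity)
  refine ⟨hmain, fun ε hε hρε => ?_⟩
  rcases Nat.eq_zero_or_pos N with h0 | hNpos
  · subst h0
    have hIe : IsEmpty I := Fintype.card_eq_zero_iff.mp hN
    simp only [Finset.univ_eq_empty, Finset.sum_empty, Real.sqrt_zero]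
    exact hε.le
  · refine hmain.trans ?_
    have hCN : (0:ℝ) < C ^ 2 * (N : ℝ) ^ 2 := by positivity
    have hlog : Real.log (C ^ 2 * (N : ℝ) ^ 2 / ε) ≤ γ * ρ := by
      have := mul_le_mul_of_nonneg_left hρε hγ.le
      rwa [← mul_assoc, mul_inv_cancel₀ hγ.ne', one_mul] at this
    have hexple : Real.exp (-γ * ρ) ≤ ε / (C ^ 2 * (N : ℝ) ^ 2) := by
      have h1 : ε / (C ^ 2 * (N : ℝ) ^ 2) = Real.exp (Real.log (ε / (C ^ 2 * (N : ℝ) ^ 2))) :=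
        (Real.exp_log (by positivity)).symm
      rw [h1]
      apply Real.exp_le_exp.mpr
      have h2 : Real.log (ε / (C ^ 2 * (N : ℝ) ^ 2)) =
          -Real.log (C ^ 2 * (N : ℝ) ^ 2 / ε) := by
        rw [← Real.log_inv, inv_div]
      rw [h2]
      linarith
    calc C ^ 2 * (N : ℝ) ^ 2 * Real.exp (-γ * ρ)
        ≤ C ^ 2 * (N : ℝ) ^ 2 * (ε / (C ^ 2 * (N : ℝ) ^ 2)) := by
          exact mul_le_mul_of_nonneg_left hexple hCN.le
      _ = ε := by field_simp
end

section
/- For every dimension d ≥ 1 and every s ∈ ℕ with s ≥ 1 there exist constants ρ(d,s) > 0 and C(d,s) > 0 with the following property. Let h > 0 and let X ⊂ ℝ^d be a set of points with covering radius at most h, i.e. for every y ∈ ℝ^d there exists x ∈ X with |y − x| ≤ h. Then for every x₀ ∈ ℝ^d there exist a finite subset σ ⊆ X with #σ = s^d contained in the closed ball of radius ρ(d,s)·h around x₀, and weights w : σ → ℝ with Σ_{x∈σ} |w_x| ≤ C(d,s), such that p(x₀) = Σ_{x∈σ} w_x · p(x) for every polynomial p : ℝ^d → ℝ of total degree at most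 s − 1. -/
/-!
Put the tensor grid `x₀ + c • {0, …, s-1}^d` with `c = h / r` and pick a point of `X` within `h`
of each node. In the coordinates `(x - x₀) / c` the chosen points lie within `r` of the integer
grid `{0, …, s-1}^d`, whose tensor-product Vandermonde matrix is a Kronecker power of a univariate
Vandermonde matrix and hence invertible. By continuity of the inverse, for `r` small the weights
reproducing evaluation at `0` on polynomials of degree `< s` in each variable exist and are
uniformly bounded, and for `r < 1/2` the `s^d` chosen points are distinct. An affine change of variables maps polynomials of total degree `≤ s - 1` into
that space, so the same weights reproduce evaluation at `x₀`.
-/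

open MvPolynomial Matrix Filter Topology Kronecker

namespace MvPolynomial

variable {σ τ R : Type*} [CommSemiring R]

theorem totalDegree_bind₁_le {f : σ → MvPolynomial τ R} (hf : ∀ i, (f i).totalDegree ≤ 1)
    (p : MvPolynomial σ R) : (bind₁ f p).totalDegree ≤ p.totalDegree := by
  conv_lhs => rw [p.as_sum, map_sum]
  refine (totalDegree_finsetSum _ _).trans (Finset.sup_le fun α hα => ?_)
  rw [bind₁_monomial]
  calc (C (p.coeff α) * ∏ i ∈ α.support, f i ^ α i).totalDegree
      ≤ 0 + ∑ i ∈ α.support, α i * 1 := by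
        refine (totalDegree_mul _ _).trans (add_le_add (totalDegree_C _).le ?_)
        refine (totalDegree_finsetProd _ _).trans (Finset.sum_le_sum fun i _ => ?_)
        exact (totalDegree_pow _ _).trans (Nat.mul_le_mul_left _ (hf i))
    _ ≤ p.totalDegree := by simpa [Finsupp.sum] using le_totalDegree hα

theorem totalDegree_C_add_C_mul_X_le (a c : R) (i : σ) :
    (C a + C c * X i : MvPolynomial σ R).totalDegree ≤ 1 := by
  refine (totalDegree_add _ _).trans (max_le (by simp) ?_)
  rw [C_mul_X_eq_monomial]
  exact (totalDegree_monomial_le _ _).trans (by simp)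

variable {ι : Type*}

theorem eval_eq_sum_mul_eval_of_eq_add_smul [Fintype ι] {n : ℕ} {w : ι → R} {Y x : ι → σ → R}
    (hrep : ∀ p ∈ restrictDegree σ R n, eval 0 p = ∑ ν, w ν * eval (Y ν) p)
    {a : σ → R} {c : R} (hx : ∀ ν, x ν = a + c • Y ν)
    {p : MvPolynomial σ R} (hp : p.totalDegree ≤ n) :
    eval a p = ∑ ν, w ν * eval (x ν) p := by
  set q := bind₁ (R := R) (fun i => C (a i) + C c * X i) p
  have heval (y : σ → R) : eval y q = eval (a + c • y) p := by
    unfold q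
    rw [hom_bind₁, show (eval y).comp C = RingHom.id R from RingHom.ext eval_C]
    simp only [eval_C, map_add, map_mul, eval_X]
    rfl
  have hq : q ∈ restrictDegree σ R n :=
    restrictTotalDegree_le_restrictDegree σ R n <| (mem_restrictTotalDegree _ _ _).2 <|
      (totalDegree_bind₁_le (fun i => totalDegree_C_add_C_mul_X_le _ _ _) p).trans hp
  simpa only [heval, smul_zero, add_zero, hx] using hrep q hq

variable [Fintype σ]

theorem eval_eq_sum_mul_eval_of_forall_mem_support {t : Finset ι} {w : ι → R}
    {Y : ι → σ → R} {z : σ → R} {p : MvPolynomial σ R}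
    (h : ∀ β ∈ p.support, ∑ ν ∈ t, w ν * ∏ m, Y ν m ^ β m = ∏ m, z m ^ β m) :
    eval z p = ∑ ν ∈ t, w ν * eval (Y ν) p := by
  simp_rw [eval_eq', Finset.mul_sum]
  rw [Finset.sum_comm]
  refine Finset.sum_congr rfl fun β hβ => ?_
  rw [← h β hβ, Finset.mul_sum]
  exact Finset.sum_congr rfl fun ν _ => by ring

theorem eval_eq_sum_mul_eval_of_mem_restrictDegree [Fintype ι] {s : ℕ} (hs : 0 < s) {w : ι → R}
    {Y : ι → σ → R} {z : σ → R}
    (h : ∀ α : σ → Fin s, ∑ ν, w ν * ∏ m, Y ν m ^ (α m : ℕ) = ∏ m, z m ^ (α m : ℕ))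
    {p : MvPolynomial σ R} (hp : p ∈ restrictDegree σ R (s - 1)) :
    eval z p = ∑ ν, w ν * eval (Y ν) p :=
  eval_eq_sum_mul_eval_of_forall_mem_support fun β hβ =>
    h fun m => ⟨β m, by have := (mem_restrictDegree _ _ _).1 hp β hβ m; omega⟩

end MvPolynomial

theorem Matrix.eventually_det_ne_zero_and_sum_abs_inv_mulVec_lt {T n : Type*}
    [TopologicalSpace T] [Fintype n] [DecidableEq n] {M : T → Matrix n n ℝ} {t₀ : T}
    (hM : ContinuousAt M t₀)
    (h₀ : (M t₀).det ≠ 0) (b : n → ℝ) :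
    ∀ᶠ t in 𝓝 t₀, (M t).det ≠ 0 ∧
      ∑ i, |((M t)⁻¹ *ᵥ b) i| < ∑ i, |((M t₀)⁻¹ *ᵥ b) i| + 1 := by
  have hdet : ContinuousAt (fun t => (M t).det) t₀ :=
    (continuous_id.matrix_det.continuousAt).comp hM
  have hinv : ContinuousAt (fun t => (M t)⁻¹) t₀ :=
    (continuousAt_matrix_inv _ (by simpa using continuousAt_inv₀ h₀)).comp hM
  have hsum : ContinuousAt (fun t => ∑ i, |((M t)⁻¹ *ᵥ b) i|) t₀ := by
    fun_prop
  exact (hdet.eventually_ne h₀).and (hsum.eventually_lt continuousAt_const (lt_add_one _))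

noncomputable def tensorVandermonde {d s : ℕ} (Y : (Fin d → Fin s) → Fin d → ℝ) :
    Matrix (Fin d → Fin s) (Fin d → Fin s) ℝ :=
  Matrix.of fun ν α => ∏ m, Y ν m ^ (α m : ℕ)

theorem continuous_tensorVandermonde (d s : ℕ) :
    Continuous (tensorVandermonde : ((Fin d → Fin s) → Fin d → ℝ) → _) :=
  continuous_matrix fun ν α => by unfold tensorVandermonde; fun_prop

theorem det_tensorVandermonde_grid_ne_zero {s : ℕ} {t : Fin s → ℝ} (ht : Function.Injective t) :
    ∀ d : ℕ, (tensorVandermonde fun (ν : Fin d → Fin s) m => t (ν m)).det ≠ 0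
  | 0 => by simp [Matrix.det_unique, tensorVandermonde]
  | d + 1 => by
    let e := Fin.consEquiv fun _ : Fin (d + 1) => Fin s
    have hsplit : tensorVandermonde (fun (ν : Fin (d + 1) → Fin s) m => t (ν m)) =
        reindex e e (vandermonde t ⊗ₖ tensorVandermonde fun (ν : Fin d → Fin s) m => t (ν m)) := by
      ext ν α
      simp only [reindex_apply, submatrix_apply, kroneckerMap_apply, tensorVandermonde, of_apply,
        e, Fin.consEquiv, Equiv.coe_fn_symm_mk, Fin.prod_univ_succ, vandermonde_apply]
      rfl
    rw [hsplit, det_reindex_self, det_kronecker]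
    exact mul_ne_zero (pow_ne_zero _ (det_vandermonde_ne_zero_iff.2 ht))
      (pow_ne_zero _ (det_tensorVandermonde_grid_ne_zero ht d))

def unitGrid (d s : ℕ) : (Fin d → Fin s) → Fin d → ℝ := fun ν m => (ν m : ℕ)

theorem exists_reproducing_weights_near_unitGrid (d : ℕ) {s : ℕ} (hs : 0 < s) :
    ∃ C : ℝ, ∀ᶠ Y in 𝓝 (unitGrid d s), ∃ w : (Fin d → Fin s) → ℝ, ∑ ν, |w ν| ≤ C ∧
      ∀ p ∈ restrictDegree (Fin d) ℝ (s - 1), eval 0 p = ∑ ν, w ν * eval (Y ν) p := by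
  let b : (Fin d → Fin s) → ℝ := fun α => ∏ m, (0 : ℝ) ^ (α m : ℕ)
  have h₀ : (tensorVandermonde (unitGrid d s))ᵀ.det ≠ 0 := by
    rw [det_transpose]
    exact det_tensorVandermonde_grid_ne_zero (Nat.cast_injective.comp Fin.val_injective) d
  refine ⟨_, (eventually_det_ne_zero_and_sum_abs_inv_mulVec_lt
    (continuous_tensorVandermonde d s).matrix_transpose.continuousAt h₀ b).mono
      fun Y ⟨hdet, hsum⟩ => ⟨_, hsum.le, fun p hp => ?_⟩⟩
  refine eval_eq_sum_mul_eval_of_mem_restrictDegree hs (fun α => ?_) hp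
  have hsolve : (tensorVandermonde Y)ᵀ *ᵥ ((tensorVandermonde Y)ᵀ⁻¹ *ᵥ b) = b := by
    rw [mulVec_mulVec, mul_nonsing_inv _ (isUnit_iff_ne_zero.2 hdet), one_mulVec]
  simpa [mulVec, dotProduct, tensorVandermonde, mul_comm] using congrFun hsolve α

theorem eventually_injective_near_unitGrid (d s : ℕ) :
    ∀ᶠ Y in 𝓝 (unitGrid d s), Function.Injective Y := by
  filter_upwards [Metric.ball_mem_nhds _ (half_pos one_pos)] with Y hY ν ν' hνν'
  funext m
  have hclose (κ : Fin d → Fin s) : |Y κ m - (κ m : ℕ)| < 1 / 2 :=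
    ((dist_le_pi_dist _ _ m).trans (dist_le_pi_dist Y (unitGrid d s) κ)).trans_lt hY
  have h₁ := hclose ν
  have h₂ := hclose ν'
  rw [hνν'] at h₁
  have h₃ : ((ν m : ℕ) : ℝ) < (ν' m : ℕ) + 1 ∧ ((ν' m : ℕ) : ℝ) < (ν m : ℕ) + 1 := by
    constructor <;> linarith [abs_lt.1 h₁, abs_lt.1 h₂]
  exact Fin.ext <| le_antisymm (Nat.lt_succ_iff.1 (by exact_mod_cast h₃.1))
    (Nat.lt_succ_iff.1 (by exact_mod_cast h₃.2))

theorem dist_rescale_le {ι σ : Type*} [Fintype ι] [Fintype σ] {x : ι → EuclideanSpace ℝ σ}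
    {x₀ : EuclideanSpace ℝ σ} {G : ι → σ → ℝ} {c h : ℝ} (hc : 0 < c) (hh : 0 ≤ h)
    (hx : ∀ ν, ‖x₀ + c • WithLp.toLp 2 (G ν) - x ν‖ ≤ h) :
    dist (fun ν m => (x ν m - x₀ m) / c) G ≤ h / c := by
  have hhc : 0 ≤ h / c := div_nonneg hh hc.le
  refine (dist_pi_le_iff hhc).2 fun ν => (dist_pi_le_iff hhc).2 fun m => ?_
  rw [Real.dist_eq, div_sub' hc.ne', abs_div, abs_of_pos hc]
  gcongr
  refine le_trans (le_of_eq ?_) ((PiLp.norm_apply_le _ m).trans (hx ν))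
  rw [Real.norm_eq_abs, ← abs_neg]
  simp only [PiLp.sub_apply, PiLp.add_apply, PiLp.smul_apply, smul_eq_mul, neg_sub]
  ring_nf

theorem EuclideanSpace.norm_le_sum_norm {ι : Type*} [Fintype ι] (v : EuclideanSpace ℝ ι) :
    ‖v‖ ≤ ∑ i, ‖v i‖ := by
  rw [EuclideanSpace.norm_eq, ← Real.sqrt_sq (Finset.sum_nonneg fun i _ => norm_nonneg (v i))]
  exact Real.sqrt_le_sqrt (Finset.sum_sq_le_sq_sum_of_nonneg fun i _ => norm_nonneg _)

theorem norm_toLp_unitGrid_le {d s : ℕ} (ν : Fin d → Fin s) :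
    ‖WithLp.toLp 2 (unitGrid d s ν)‖ ≤ d * s := by
  refine (EuclideanSpace.norm_le_sum_norm _).trans ?_
  calc ∑ m, ‖((ν m : ℕ) : ℝ)‖ ≤ ∑ _m : Fin d, (s : ℝ) :=
        Finset.sum_le_sum fun m _ => by simp [(ν m).is_lt.le]
    _ = d * s := by simp

theorem norm_sub_le_of_norm_add_smul_sub_le {E : Type*} [SeminormedAddCommGroup E]
    [NormedSpace ℝ E] {x x₀ g : E} {c h K : ℝ} (hc : 0 ≤ c) (hx : ‖x₀ + c • g - x‖ ≤ h)
    (hg : ‖g‖ ≤ K) : ‖x - x₀‖ ≤ h + c * K :=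
  calc ‖x - x₀‖ = ‖(x₀ + c • g - x) - c • g‖ := by rw [← norm_neg]; congr 1; abel
    _ ≤ ‖x₀ + c • g - x‖ + ‖c • g‖ := norm_sub_le _ _
    _ ≤ h + c * K := by
      rw [norm_smul, Real.norm_of_nonneg hc]
      gcongr

theorem polynomial_reproduction_from_scattered_points_general
    (d s : ℕ) (hs : 1 ≤ s) :
    ∃ ρ C : ℝ, 0 < ρ ∧ 0 < C ∧
      ∀ h : ℝ, 0 < h →
      ∀ X : Set (EuclideanSpace ℝ (Fin d)),
        (∀ y : EuclideanSpace ℝ (Fin d), ∃ x ∈ X, ‖y - x‖ ≤ h) →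
        ∀ x₀ : EuclideanSpace ℝ (Fin d),
          ∃ (σ : Finset (EuclideanSpace ℝ (Fin d))) (w : EuclideanSpace ℝ (Fin d) → ℝ),
            ↑σ ⊆ X ∧
            σ.card = s ^ d ∧
            (∀ x ∈ σ, ‖x - x₀‖ ≤ ρ * h) ∧
            (∑ x ∈ σ, |w x|) ≤ C ∧
            ∀ p : MvPolynomial (Fin d) ℝ, p.totalDegree ≤ s - 1 →
              MvPolynomial.eval (fun m => x₀ m) p =
                ∑ x ∈ σ, w x * MvPolynomial.eval (fun m => x m) p := by
  obtain ⟨C, hC⟩ := exists_reproducing_weights_near_unitGrid d hs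
  obtain ⟨r, hr, hnear⟩ := Metric.nhds_basis_closedBall.eventually_iff.1
    (hC.and (eventually_injective_near_unitGrid d s))
  refine ⟨1 + d * s / r, max C 1, by positivity, by positivity, fun h hh X hX x₀ => ?_⟩
  set c := h / r
  have hc : 0 < c := div_pos hh hr
  choose x hxX hx using fun ν => hX (x₀ + c • WithLp.toLp 2 (unitGrid d s ν))
  obtain ⟨⟨w, hw, hrep⟩, hYinj⟩ := hnear <|
    (dist_rescale_le hc hh.le hx).trans_eq (div_div_cancel₀ hh.ne')
  have hinj : Function.Injective x := hYinj.of_comp (f := fun y m => (y m - x₀ m) / c)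
  refine ⟨Finset.univ.image x, Function.extend x w 0, ?_, ?_, ?_, ?_, fun p hp => ?_⟩
  · simpa [Set.subset_def] using hxX
  · simp [Finset.card_image_of_injective _ hinj]
  · simp only [Finset.mem_image, Finset.mem_univ, true_and, forall_exists_index,
      forall_apply_eq_imp_iff]
    intro ν
    refine (norm_sub_le_of_norm_add_smul_sub_le hc.le (hx ν)
      (norm_toLp_unitGrid_le ν)).trans_eq ?_
    simp only [c]
    field_simp
  · rw [Finset.sum_image hinj.injOn]
    simpa [hinj.extend_apply] using hw.trans (le_max_left _ _)
  · rw [Finset.sum_image hinj.injOn]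
    simp only [hinj.extend_apply]
    refine eval_eq_sum_mul_eval_of_eq_add_smul (c := c) hrep (fun ν => ?_) hp
    funext m
    simp [mul_div_cancel₀ _ hc.ne']

/-- Polynomial reproduction from scattered points: any point value
`p(x₀)` of a polynomial of total degree at most `s − 1` can be reproduced by a fixed
set of `s^d` points of any `h`-dense point set within distance `ρ(d,s)·h` of `x₀`,
with weights of total mass at most `C(d,s)`. -/
theorem polynomial_reproduction_from_scattered_points
    (d s : ℕ) (hd : 1 ≤ d) (hs : 1 ≤ s) :
    ∃ ρ C : ℝ, 0 < ρ ∧ 0 < C ∧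
      ∀ h : ℝ, 0 < h →
      ∀ X : Set (EuclideanSpace ℝ (Fin d)),
        (∀ y : EuclideanSpace ℝ (Fin d), ∃ x ∈ X, ‖y - x‖ ≤ h) →
        ∀ x₀ : EuclideanSpace ℝ (Fin d),
          ∃ (σ : Finset (EuclideanSpace ℝ (Fin d))) (w : EuclideanSpace ℝ (Fin d) → ℝ),
            ↑σ ⊆ X ∧
            σ.card = s ^ d ∧
            (∀ x ∈ σ, ‖x - x₀‖ ≤ ρ * h) ∧
            (∑ x ∈ σ, |w x|) ≤ C ∧
            ∀ p : MvPolynomial (Fin d) ℝ, p.totalDegree ≤ s - 1 →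
              MvPolynomial.eval (fun m => x₀ m) p =
                ∑ x ∈ σ, w x * MvPolynomial.eval (fun m => x m) p :=
  polynomial_reproduction_from_scattered_points_general d s hs
end
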